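/- arXiv:2009.11096 — 10 statements merged into one kernel-verified Lean document; each statement's English description precedes it below -/
import Mathlib

section
/- Let (g,[·,·]_g) be a Lie algebra over a field K, ρ: g → gl(V) a representation of g on a K-vector space V, and T: V → g an embedding tensor, i.e. [Tu,Tv]_g = T(ρ(Tu)v) for all u,v ∈ V. Then the bilinear operation [u,v]_T := ρ(Tu)v is a Leibniz algebra structure on V, i.e. [u,[v,w]_T]_T = [[u,v]_T,w]_T + [v,[u,w]_T]_T for all u,v,w ∈ V. -/
attribute [local instance 100] LieRing.ofAssociativeRing

/-- An embedding tensor `T` on a LieRep pair `(g, V)` induces a (left) Leibniz algebra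
structure `[u,v]_T := ρ(Tu)v` on `V`. -/
theorem embedding_tensor_induces_leibniz
    (K : Type*) [Field K] (g V : Type*) [LieRing g] [LieAlgebra K g]
    [AddCommGroup V] [Module K V]
    (ρ : g →ₗ⁅K⁆ Module.End K V) (T : V →ₗ[K] g)
    (hT : ∀ u v : V, ⁅T u, T v⁆ = T (ρ (T u) v)) :
    ∀ u v w : V,
      ρ (T u) (ρ (T v) w) = ρ (T (ρ (T u) v)) w + ρ (T v) (ρ (T u) w) := by
  intro u v w
  calc ρ (T u) (ρ (T v) w) = ⁅ρ (T u), ρ (T v)⁆ w + ρ (T v) (ρ (T u) w) := by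
        rw [LieRing.of_associative_ring_bracket, LinearMap.sub_apply, Module.End.mul_apply,
          Module.End.mul_apply, sub_add_cancel]
    _ = ρ (T (ρ (T u) v)) w + ρ (T v) (ρ (T u) w) := by rw [← LieHom.map_lie, hT]
end

section
/- Let 𝔗: W → 𝔥 be a linear map between vector spaces over a field K. Define End(W→𝔥) = {(A₀,A₁) ∈ gl(𝔥) × gl(W) : A₀∘𝔗 = 𝔗∘A₁}. Then: (1) End(W→𝔥) is a Lie subalgebra of gl(𝔥) × gl(W) with the componentwise commutator bracket; (2) ρ(A₀,A₁)(Φ) := A₁∘Φ − Φ∘A₀ defines a representation of End(W→𝔥) on Hom(𝔥,W); (3) the map 𝔗̄: Hom(𝔥,W) → End(W→𝔥), 𝔗̄(Φ) = (𝔗∘Φ, Φ∘𝔗), is well defined and is an embedding tensor: [𝔗̄(Φ), 𝔗̄(Ψ)] = 𝔗̄(ρ(𝔗̄(Φ))Ψ) for all Φ,Ψ ∈ Hom(𝔥,W). -/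
/-!
The pairs `(A₀, A₁)` with `A₀ ∘ 𝔗 = 𝔗 ∘ A₁` form an associative subalgebra of
`End 𝔥 × End W`, hence are closed under commutators. The action `Φ ↦ A₁ ∘ Φ - Φ ∘ A₀` is the
difference of the commuting left and right composition actions, so it respects brackets. Finally
`𝔗̄` is linear and multiplicative up to inserting `𝔗`: `𝔗̄ Φ * 𝔗̄ Ψ = 𝔗̄ (Φ ∘ 𝔗 ∘ Ψ)`, so the
commutator of `𝔗̄ Φ` and `𝔗̄ Ψ` is `𝔗̄ (Φ ∘ 𝔗 ∘ Ψ - Ψ ∘ 𝔗 ∘ Φ)`.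
-/

theorem Prod.mk_lie_eq_commutator {A B : Type*} [Ring A] [Ring B] (p q : A × B) :
    (⁅p.1, q.1⁆, ⁅p.2, q.2⁆) = p * q - q * p :=
  Prod.ext (Ring.lie_def _ _) (Ring.lie_def _ _)

namespace TwoTermComplex

variable {R W H : Type*} [CommRing R] [AddCommGroup W] [Module R W] [AddCommGroup H] [Module R H]

open LinearMap

def homAction (A : Module.End R H × Module.End R W) (Φ : H →ₗ[R] W) : H →ₗ[R] W :=
  A.2 ∘ₗ Φ - Φ ∘ₗ A.1

theorem homAction_lie (A B : Module.End R H × Module.End R W) (Φ : H →ₗ[R] W) :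
    homAction (⁅A.1, B.1⁆, ⁅A.2, B.2⁆) Φ =
      homAction A (homAction B Φ) - homAction B (homAction A Φ) := by
  simp only [homAction, Ring.lie_def, Module.End.mul_eq_comp, comp_sub, sub_comp, comp_assoc]
  abel

section

variable (T : W →ₗ[R] H)

def endSubalgebra : Subalgebra R (Module.End R H × Module.End R W) where
  carrier := {p | p.1 ∘ₗ T = T ∘ₗ p.2}
  mul_mem' {p q} hp hq := by
    change (p.1 ∘ₗ q.1) ∘ₗ T = T ∘ₗ p.2 ∘ₗ q.2
    rw [comp_assoc, hq, ← comp_assoc, hp, comp_assoc]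
  add_mem' {p q} hp hq := by
    change (p.1 + q.1) ∘ₗ T = T ∘ₗ (p.2 + q.2)
    rw [add_comp, comp_add, hp, hq]
  algebraMap_mem' c := by
    change (c • LinearMap.id) ∘ₗ T = T ∘ₗ (c • LinearMap.id)
    rw [smul_comp, comp_smul, id_comp, comp_id]

theorem lie_mem_endSubalgebra {p q : Module.End R H × Module.End R W}
    (hp : p ∈ endSubalgebra T) (hq : q ∈ endSubalgebra T) :
    (⁅p.1, q.1⁆, ⁅p.2, q.2⁆) ∈ endSubalgebra T := by
  rw [Prod.mk_lie_eq_commutator]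
  exact sub_mem (mul_mem hp hq) (mul_mem hq hp)

def embeddingTensor : (H →ₗ[R] W) →ₗ[R] Module.End R H × Module.End R W where
  toFun Φ := (T ∘ₗ Φ, Φ ∘ₗ T)
  map_add' Φ Ψ := by rw [comp_add, add_comp, Prod.mk_add_mk]
  map_smul' c Φ := by rw [comp_smul, smul_comp, RingHom.id_apply, Prod.smul_mk]

theorem embeddingTensor_mem (Φ : H →ₗ[R] W) : embeddingTensor T Φ ∈ endSubalgebra T :=
  comp_assoc T Φ T

theorem embeddingTensor_mul (Φ Ψ : H →ₗ[R] W) :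
    embeddingTensor T Φ * embeddingTensor T Ψ = embeddingTensor T (Φ ∘ₗ T ∘ₗ Ψ) := by
  ext : 1 <;> simp [embeddingTensor, Module.End.mul_eq_comp, comp_assoc]

theorem homAction_embeddingTensor (Φ Ψ : H →ₗ[R] W) :
    homAction (embeddingTensor T Φ) Ψ = Φ ∘ₗ T ∘ₗ Ψ - Ψ ∘ₗ T ∘ₗ Φ := by
  simp only [homAction, embeddingTensor, coe_mk, AddHom.coe_mk, comp_assoc]

theorem lie_embeddingTensor (Φ Ψ : H →ₗ[R] W) :
    (⁅(embeddingTensor T Φ).1, (embeddingTensor T Ψ).1⁆,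
        ⁅(embeddingTensor T Φ).2, (embeddingTensor T Ψ).2⁆) =
      embeddingTensor T (homAction (embeddingTensor T Φ) Ψ) := by
  rw [Prod.mk_lie_eq_commutator, embeddingTensor_mul, embeddingTensor_mul, ← map_sub,
    homAction_embeddingTensor]

end

end TwoTermComplex

open TwoTermComplex in
/-- For a 2-term complex `𝔗 : W → 𝔥`: the endomorphisms of the complex form a Lie
subalgebra of `gl(𝔥) × gl(W)`, they represent on `Hom(𝔥, W)` via
`ρ(A₀,A₁)(Φ) = A₁∘Φ − Φ∘A₀`, and `𝔗̄(Φ) = (𝔗∘Φ, Φ∘𝔗)` is an embedding tensor. -/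
theorem twoTermComplex_endomorphisms_lieLeibniz_triple
    (K W H : Type*) [Field K] [AddCommGroup W] [Module K W]
    [AddCommGroup H] [Module K H] (𝔗 : W →ₗ[K] H) :
    let E : Set (Module.End K H × Module.End K W) := {p | p.1 ∘ₗ 𝔗 = 𝔗 ∘ₗ p.2}
    let ρ : (Module.End K H × Module.End K W) → (H →ₗ[K] W) → (H →ₗ[K] W) :=
      fun A Φ => A.2 ∘ₗ Φ - Φ ∘ₗ A.1
    let Tbar : (H →ₗ[K] W) → Module.End K H × Module.End K W :=
      fun Φ => (𝔗 ∘ₗ Φ, Φ ∘ₗ 𝔗)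
    -- (1) `E` is a Lie subalgebra of `gl(𝔥) × gl(W)`
    (((0 : Module.End K H × Module.End K W) ∈ E) ∧
     (∀ p q, p ∈ E → q ∈ E → p + q ∈ E) ∧
     (∀ (c : K) p, p ∈ E → c • p ∈ E) ∧
     (∀ p q, p ∈ E → q ∈ E → (⁅p.1, q.1⁆, ⁅p.2, q.2⁆) ∈ E)) ∧
    -- (2) `ρ` is a representation of `E` on `Hom(𝔥, W)`
    (∀ p q, p ∈ E → q ∈ E → ∀ Φ : H →ₗ[K] W,
      ρ (⁅p.1, q.1⁆, ⁅p.2, q.2⁆) Φ = ρ p (ρ q Φ) - ρ q (ρ p Φ)) ∧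
    -- (3) `𝔗̄` is well defined and an embedding tensor
    ((∀ Φ : H →ₗ[K] W, Tbar Φ ∈ E) ∧
     (∀ Φ Ψ : H →ₗ[K] W,
       (⁅(Tbar Φ).1, (Tbar Ψ).1⁆, ⁅(Tbar Φ).2, (Tbar Ψ).2⁆) = Tbar (ρ (Tbar Φ) Ψ))) := by
  intro E ρ Tbar
  let S := endSubalgebra 𝔗
  exact ⟨⟨S.zero_mem, fun _ _ => S.add_mem, fun c _ => S.smul_mem (r := c),
      fun _ _ => lie_mem_endSubalgebra 𝔗⟩,
    fun p q _ _ => homAction_lie p q, embeddingTensor_mem 𝔗, lie_embeddingTensor 𝔗⟩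
end

section
/- Let H₃(ℂ) be the 3-dimensional Heisenberg Lie algebra over ℂ with basis e₁,e₂,e₃ and brackets [e₁,e₂] = e₃, [e₁,e₃] = 0, [e₂,e₃] = 0. A linear map T: H₃(ℂ) → H₃(ℂ), given in this basis by the matrix (r_{ij})_{1≤i,j≤3}, is an embedding tensor with respect to the adjoint representation (i.e. [Te_i, Te_j] = T[Te_i, e_j] for all i,j) if and only if r₁₃ = r₂₃ = 0 and either (r₃₃ = 0 and r₁₁r₂₂ = r₁₂r₂₁) or (r₃₃ ≠ 0 and r₁₂ = r₂₁ = 0 and r₁₁r₂₂ = r₂₂r₃₃ = r₁₁r₃₃). -/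
/-!
Write `ω(x, y) = x₁y₂ - x₂y₁`, so that `[x, y] = ω(x, y) e₃`, and let `A` be the upper left
`2 × 2` block of `T`. Then `T[Tu, v] = ω(Tu, v) · Te₃`, and taking `u = e₃` shows that the
first two entries of `Te₃` square to zero. Once they vanish, the embedding tensor identity
only involves the third coordinate and reads `det A · ω(u, v) = r₃₃ · ω(Au, v)`; comparing
coefficients of this identity of bilinear forms gives four scalar equations, whose solutions
split according to whether `r₃₃` vanishes.
-/

namespace Heisenberg

variable {K : Type*} [CommRing K]

def bracket (x y : K × K × K) : K × K × K :=
  (0, 0, x.1 * y.2.1 - x.2.1 * y.1)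

def matrixMap (r : Fin 3 → Fin 3 → K) (x : K × K × K) : K × K × K :=
  (r 0 0 * x.1 + r 0 1 * x.2.1 + r 0 2 * x.2.2,
   r 1 0 * x.1 + r 1 1 * x.2.1 + r 1 2 * x.2.2,
   r 2 0 * x.1 + r 2 1 * x.2.1 + r 2 2 * x.2.2)

def IsAdjointEmbeddingTensor {V : Type*} (br : V → V → V) (T : V → V) : Prop :=
  ∀ u v, br (T u) (T v) = T (br (T u) v)

theorem det_eq_mul_diag_and_mul_offDiag_eq_zero_iff [NoZeroDivisors K] {a b c d s : K} :
    (a * d - b * c = s * a ∧ a * d - b * c = s * d ∧ s * b = 0 ∧ s * c = 0) ↔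
      (s = 0 ∧ a * d = b * c) ∨
        (s ≠ 0 ∧ b = 0 ∧ c = 0 ∧ a * d = d * s ∧ d * s = a * s) := by
  by_cases hs : s = 0
  · subst hs
    simp only [zero_mul, sub_eq_zero, true_and, and_true, ne_eq, not_true_eq_false,
      false_and, or_false, and_self]
  · simp only [hs, mul_eq_zero, false_or, false_and, ne_eq, not_false_eq_true, true_and]
    constructor
    · rintro ⟨hda, hdd, rfl, rfl⟩
      exact ⟨rfl, rfl, by linear_combination hdd, by linear_combination hda - hdd⟩
    · rintro ⟨rfl, rfl, had, hds⟩
      exact ⟨by linear_combination had + hds, by linear_combination had, rfl, rfl⟩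

theorem isAdjointEmbeddingTensor_matrixMap_iff [NoZeroDivisors K] (r : Fin 3 → Fin 3 → K) :
    IsAdjointEmbeddingTensor bracket (matrixMap r) ↔
      r 0 2 = 0 ∧ r 1 2 = 0 ∧
        (r 0 0 * r 1 1 - r 0 1 * r 1 0 = r 2 2 * r 0 0 ∧
          r 0 0 * r 1 1 - r 0 1 * r 1 0 = r 2 2 * r 1 1 ∧
          r 2 2 * r 0 1 = 0 ∧ r 2 2 * r 1 0 = 0) := by
  constructor
  · intro h
    have h31 := h (0, 0, 1) (1, 0, 0)
    have h32 := h (0, 0, 1) (0, 1, 0)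
    have h11 := h (1, 0, 0) (1, 0, 0)
    have h12 := h (1, 0, 0) (0, 1, 0)
    have h21 := h (0, 1, 0) (1, 0, 0)
    have h22 := h (0, 1, 0) (0, 1, 0)
    simp only [bracket, matrixMap, Prod.mk.injEq, mul_one, mul_zero,
      add_zero, zero_add, sub_zero, zero_sub] at h31 h32 h11 h12 h21 h22
    exact ⟨mul_self_eq_zero.mp h32.1.symm, mul_self_eq_zero.mp (by linear_combination h31.2.1),
      by linear_combination h12.2.2, by linear_combination -h21.2.2,
      by linear_combination -h22.2.2, by linear_combination h11.2.2⟩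
  · rintro ⟨h02, h12, hd0, hd1, h01, h10⟩ u v
    simp only [bracket, matrixMap, Prod.mk.injEq, h02, h12, zero_mul, mul_zero, add_zero,
      true_and]
    linear_combination u.1 * v.2.1 * hd0 - u.2.1 * v.1 * hd1 - u.2.1 * v.2.1 * h01 +
      u.1 * v.1 * h10

end Heisenberg

open Heisenberg in
/-- Classification of embedding tensors on the 3-dimensional complex Heisenberg Lie
algebra with respect to the adjoint representation: the linear map `T` with matrix
`(r i j)` (in the basis `e₁, e₂, e₃` with `[e₁,e₂] = e₃`) is an embedding tensor iff
`r₁₃ = r₂₃ = 0` and either (`r₃₃ = 0` and `r₁₁r₂₂ = r₁₂r₂₁`) or (`r₃₃ ≠ 0`,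
`r₁₂ = r₂₁ = 0` and `r₁₁r₂₂ = r₂₂r₃₃ = r₁₁r₃₃`). -/
theorem heisenberg_embedding_tensor_classification (r : Fin 3 → Fin 3 → ℂ) :
    let br : ℂ × ℂ × ℂ → ℂ × ℂ × ℂ → ℂ × ℂ × ℂ :=
      fun x y => (0, 0, x.1 * y.2.1 - x.2.1 * y.1)
    let T : ℂ × ℂ × ℂ → ℂ × ℂ × ℂ :=
      fun x => (r 0 0 * x.1 + r 0 1 * x.2.1 + r 0 2 * x.2.2,
                r 1 0 * x.1 + r 1 1 * x.2.1 + r 1 2 * x.2.2,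
                r 2 0 * x.1 + r 2 1 * x.2.1 + r 2 2 * x.2.2)
    (∀ u v : ℂ × ℂ × ℂ, br (T u) (T v) = T (br (T u) v)) ↔
      (r 0 2 = 0 ∧ r 1 2 = 0 ∧
        ((r 2 2 = 0 ∧ r 0 0 * r 1 1 = r 0 1 * r 1 0) ∨
         (r 2 2 ≠ 0 ∧ r 0 1 = 0 ∧ r 1 0 = 0 ∧
          r 0 0 * r 1 1 = r 1 1 * r 2 2 ∧ r 1 1 * r 2 2 = r 0 0 * r 2 2))) := by
  intro br T
  show IsAdjointEmbeddingTensor bracket (matrixMap r) ↔ _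
  rw [isAdjointEmbeddingTensor_matrixMap_iff, det_eq_mul_diag_and_mul_offDiag_eq_zero_iff]
end

section
/- Let (g,[·,·]_g) be a Lie algebra over a field K, ρ: g → gl(V) a representation, and T: V → g an embedding tensor. Define ρ^L, ρ^R: V → gl(g) by ρ^L(u)y = [Tu, y]_g and ρ^R(v)x = [x, Tv]_g − T(ρ(x)v). Then (g; ρ^L, ρ^R) is a representation of the Leibniz algebra (V, [·,·]_T), where [u,v]_T = ρ(Tu)v; that is, for all u,v ∈ V: ρ^L([u,v]_T) = ρ^L(u)∘ρ^L(v) − ρ^L(v)∘ρ^L(u), ρ^R([u,v]_T) = ρ^L(u)∘ρ^R(v) − ρ^R(v)∘ρ^L(u), and ρ^R(v)∘ρ^L(u) = −ρ^R(v)∘ρ^R(u). -/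
attribute [local instance 100] LieRing.ofAssociativeRing

/-!
Since `T` carries `[u, v]_T` to `[Tu, Tv]`, the first identity is the Jacobi identity. The second
is Jacobi again, once the embedding-tensor identity rewrites `[Tu, T(ρ(x)v)]` as `T(ρ(Tu)ρ(x)v)`.
For the third, `ρᴸ(u) + ρᴿ(u)` takes values in the image of `T`, on which every `ρᴿ(v)` vanishes
by the embedding-tensor identity.
-/

theorem LieHom.map_lie_apply {R L M : Type*} [CommRing R] [LieRing L] [LieAlgebra R L]
    [AddCommGroup M] [Module R M] (ρ : L →ₗ⁅R⁆ Module.End R M) (a b : L) (v : M) :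
    ρ ⁅a, b⁆ v = ρ a (ρ b v) - ρ b (ρ a v) := by
  rw [LieHom.map_lie, Ring.lie_def, LinearMap.sub_apply, Module.End.mul_apply,
    Module.End.mul_apply]

section

variable {K g V : Type*} [CommRing K] [LieRing g] [LieAlgebra K g] [AddCommGroup V] [Module K V]
  (ρ : g →ₗ⁅K⁆ Module.End K V) (T : V →ₗ[K] g)

def IsEmbeddingTensor : Prop := ∀ u v : V, ⁅T u, T v⁆ = T (ρ (T u) v)

namespace IsEmbeddingTensor

/-- `ρᴿ(v)`, as a linear endomorphism of `g`. -/
def rightAction (v : V) : g →ₗ[K] g where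
  toFun x := ⁅x, T v⁆ - T (ρ x v)
  map_add' x y := by
    simp only [add_lie, map_add, LinearMap.add_apply]
    abel
  map_smul' c x := by
    simp only [smul_lie, map_smul, LinearMap.smul_apply, RingHom.id_apply, smul_sub]

theorem rightAction_apply (v : V) (x : g) : rightAction ρ T v x = ⁅x, T v⁆ - T (ρ x v) := rfl

theorem lie_add_rightAction (u : V) (x : g) : ⁅T u, x⁆ + rightAction ρ T u x = -T (ρ x u) := by
  rw [rightAction_apply, ← lie_skew]
  abel

variable {ρ T}

theorem rightAction_map (hT : IsEmbeddingTensor ρ T) (v w : V) :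
    rightAction ρ T v (T w) = 0 :=
  sub_eq_zero.2 (hT w v)

theorem map_bracket_lie (hT : IsEmbeddingTensor ρ T) (u v : V) (x : g) :
    ⁅T (ρ (T u) v), x⁆ = ⁅T u, ⁅T v, x⁆⁆ - ⁅T v, ⁅T u, x⁆⁆ := by
  rw [← hT, lie_lie]

theorem rightAction_bracket (hT : IsEmbeddingTensor ρ T) (u v : V) (x : g) :
    rightAction ρ T (ρ (T u) v) x =
      ⁅T u, rightAction ρ T v x⁆ - rightAction ρ T v ⁅T u, x⁆ := by
  simp only [rightAction_apply]
  rw [← hT, ρ.map_lie_apply, lie_sub, leibniz_lie x (T u) (T v), hT, map_sub,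
    ← lie_skew (T u) x, neg_lie]
  abel

theorem rightAction_lie (hT : IsEmbeddingTensor ρ T) (u v : V) (x : g) :
    rightAction ρ T v ⁅T u, x⁆ = -rightAction ρ T v (rightAction ρ T u x) := by
  rw [← neg_eq_iff_eq_neg, ← map_neg, ← sub_eq_zero, ← map_sub, ← neg_add',
    lie_add_rightAction, neg_neg, hT.rightAction_map]

end IsEmbeddingTensor

end

/-- Given an embedding tensor `T` on a LieRep pair `(g, V)`, the maps
`ρᴸ(u)y = [Tu, y]` and `ρᴿ(v)x = [x, Tv] − T(ρ(x)v)` make `g` a representation of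
the induced Leibniz algebra `(V, [·,·]_T)`. -/
theorem embedding_tensor_leibniz_representation
    (K g V : Type*) [Field K] [LieRing g] [LieAlgebra K g]
    [AddCommGroup V] [Module K V]
    (ρ : g →ₗ⁅K⁆ Module.End K V) (T : V →ₗ[K] g)
    (hT : ∀ u v : V, ⁅T u, T v⁆ = T (ρ (T u) v)) :
    let ρL : V → g → g := fun u y => ⁅T u, y⁆
    let ρR : V → g → g := fun v x => ⁅x, T v⁆ - T (ρ x v)
    let br : V → V → V := fun u v => ρ (T u) v
    (∀ (u v : V) (x : g), ρL (br u v) x = ρL u (ρL v x) - ρL v (ρL u x)) ∧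
    (∀ (u v : V) (x : g), ρR (br u v) x = ρL u (ρR v x) - ρR v (ρL u x)) ∧
    (∀ (u v : V) (x : g), ρR v (ρL u x) = -(ρR v (ρR u x))) := by
  have hT' : IsEmbeddingTensor ρ T := hT
  exact ⟨hT'.map_bracket_lie, hT'.rightAction_bracket, hT'.rightAction_lie⟩
end

section
/- Let (g,[·,·]_g) be a Lie algebra over a field K, ρ: g → gl(V) a representation, and T: V → g an embedding tensor. For a k-multilinear map θ: V^k → g define Φ(θ): V^{k+1} → V by Φ(θ)(u₁,…,u_k,u_{k+1}) = −ρ(θ(u₁,…,u_k))u_{k+1}, define ∂_T θ: V^{k+1} → g by ∂_T θ(u₁,…,u_{k+1}) = Σ_{i=1}^{k}(−1)^{i+1}[Tu_i, θ(u₁,…,û_i,…,u_{k+1})]_g + (−1)^{k+1}[θ(u₁,…,u_k), Tu_{k+1}]_g + (−1)^k T(ρ(θ(u₁,…,u_k))u_{k+1}) + Σ_{1≤i<j≤k+1}(−1)^i θ(u₁,…,û_i,…,u_{j−1}, ρ(Tu_i)u_j, u_{j+1},…,u_{k+1}), and let ∂ be the Loday–Pirashvili coboundary of the Leibniz algebra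 (V,[·,·]_T) (where [u,v]_T = ρ(Tu)v) with coefficients in its regular representation: for f: V^{k+1} → V, (∂f)(u₁,…,u_{k+2}) = Σ_{i=1}^{k+1}(−1)^{i+1}[u_i, f(u₁,…,û_i,…,u_{k+2})]_T + (−1)^{k+2}[f(u₁,…,u_{k+1}), u_{k+2}]_T + Σ_{1≤i<j≤k+2}(−1)^i f(u₁,…,û_i,…,u_{j−1}, [u_i,u_j]_T, u_{j+1},…,u_{k+2}). Then for every k-multilinear θ: V^k → g one has Φ(∂_T θ) = ∂(Φ(θ)). -/
attribute [local instance 100] LieRing.ofAssociativeRing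

namespace EmbeddingTensorCohomology

variable (K : Type*) [Field K] {g V : Type*} [LieRing g] [LieAlgebra K g]
  [AddCommGroup V] [Module K V]

/-- The coboundary operator `∂_T` of an embedding tensor `T`, on `k`-cochains
`θ : V^k → g`. -/
def dT (ρ : g →ₗ⁅K⁆ Module.End K V) (T : V →ₗ[K] g) {k : ℕ}
    (θ : (Fin k → V) → g) : (Fin (k + 1) → V) → g := fun u =>
  (∑ i : Fin k, ((-1 : K) ^ (i : ℕ)) •
      ⁅T (u i.castSucc), θ (fun l => u (i.castSucc.succAbove l))⁆)
    + ((-1 : K) ^ (k + 1)) • ⁅θ (fun l => u l.castSucc), T (u (Fin.last k))⁆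
    + ((-1 : K) ^ k) • T (ρ (θ (fun l => u l.castSucc)) (u (Fin.last k)))
    + ∑ i : Fin (k + 1), ∑ j : Fin (k + 1),
        if i < j then
          ((-1 : K) ^ ((i : ℕ) + 1)) •
            θ (fun l => Function.update u j (ρ (T (u i)) (u j)) (i.succAbove l))
        else 0

/-- The Loday–Pirashvili coboundary of the Leibniz algebra `(V, [·,·]_T)`
(`[u,v]_T = ρ(Tu)v`) with coefficients in the regular representation. -/
def lp (ρ : g →ₗ⁅K⁆ Module.End K V) (T : V →ₗ[K] g) {m : ℕ}
    (f : (Fin m → V) → V) : (Fin (m + 1) → V) → V := fun u =>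
  (∑ i : Fin m, ((-1 : K) ^ (i : ℕ)) •
      ρ (T (u i.castSucc)) (f (fun l => u (i.castSucc.succAbove l))))
    + ((-1 : K) ^ (m + 1)) • ρ (T (f (fun l => u l.castSucc))) (u (Fin.last m))
    + ∑ i : Fin (m + 1), ∑ j : Fin (m + 1),
        if i < j then
          ((-1 : K) ^ ((i : ℕ) + 1)) •
            f (fun l => Function.update u j (ρ (T (u i)) (u j)) (i.succAbove l))
        else 0

/-- The map `Φ`, sending a `k`-cochain `θ : V^k → g` to the `(k+1)`-cochain
`Φ(θ)(u₁,…,u_{k+1}) = −ρ(θ(u₁,…,u_k))u_{k+1}`. -/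
def Phi (ρ : g →ₗ⁅K⁆ Module.End K V) {k : ℕ}
    (θ : (Fin k → V) → g) : (Fin (k + 1) → V) → V := fun u =>
  -(ρ (θ (fun l => u l.castSucc)) (u (Fin.last k)))

end EmbeddingTensorCohomology

/-!
Write `v = (u₁, …, u_{k+1})` and `x = u_{k+2}`, so that `Φ(θ)(v, x) = -ρ(θ(v₁, …, v_k)) x`.
Since `ρ` is a morphism of Lie algebras, `-ρ[T vᵢ, θ(…, v̂ᵢ, …)] x` splits into the term of
`∂(Φθ)` in which `T vᵢ` acts on the output of `Φθ` and the term in which it acts on `x`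
(the face `j = k + 2` of the double sum). Once the first two sums of `∂_T` are merged into a
single sum over `i ≤ k + 1`, the remaining terms of both sides agree one by one.
-/

namespace EmbeddingTensorCohomology

open Finset Function Fin

variable {K : Type*} [Field K] {g V : Type*} [LieRing g] [LieAlgebra K g]
  [AddCommGroup V] [Module K V] (ρ : g →ₗ⁅K⁆ Module.End K V) (T : V →ₗ[K] g)

theorem map_lie_apply (x y : g) (v : V) : ρ ⁅x, y⁆ v = ρ x (ρ y v) - ρ y (ρ x v) := by
  rw [LieHom.map_lie, Ring.lie_def, LinearMap.sub_apply, Module.End.mul_apply,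
    Module.End.mul_apply]

theorem dT_apply {k : ℕ} (θ : (Fin k → V) → g) (v : Fin (k + 1) → V) :
    dT K ρ T θ v =
      (∑ i : Fin (k + 1), ((-1 : K) ^ (i : ℕ)) • ⁅T (v i), θ (fun l => v (i.succAbove l))⁆)
      + ((-1 : K) ^ k) • T (ρ (θ (init v)) (v (last k)))
      + ∑ i : Fin (k + 1), ∑ j : Fin (k + 1),
          if i < j then
            ((-1 : K) ^ ((i : ℕ) + 1)) •
              θ (fun l => update v j (ρ (T (v i)) (v j)) (i.succAbove l))
          else 0 := by
  rw [sum_univ_castSucc, dT, ← lie_skew, pow_succ, mul_neg_one, neg_smul, smul_neg, neg_neg]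
  simp only [val_last, succAbove_last]
  rfl

theorem lp_apply_succ {k : ℕ} (f : (Fin (k + 1) → V) → V) (u : Fin (k + 2) → V) :
    lp K ρ T f u =
      (∑ i : Fin (k + 1), ((-1 : K) ^ (i : ℕ)) •
          ρ (T (u i.castSucc)) (f (fun l => u (i.castSucc.succAbove l))))
      + ((-1 : K) ^ k) • ρ (T (f (init u))) (u (last (k + 1)))
      + (∑ i : Fin (k + 1), ∑ j : Fin (k + 1),
          if i < j then
            ((-1 : K) ^ ((i : ℕ) + 1)) •
              f (fun l => update u j.castSucc (ρ (T (u i.castSucc)) (u j.castSucc))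
                (i.castSucc.succAbove l))
          else 0)
      + ∑ i : Fin (k + 1), ((-1 : K) ^ ((i : ℕ) + 1)) •
          f (fun l => update u (last (k + 1)) (ρ (T (u i.castSucc)) (u (last (k + 1))))
            (i.castSucc.succAbove l)) := by
  simp only [lp, sum_univ_castSucc (n := k + 1), castSucc_lt_castSucc_iff, castSucc_lt_last,
    if_true, (le_last _).not_gt, if_false, sum_const_zero, add_zero, sum_add_distrib]
  rw [pow_succ, pow_succ, mul_neg_one, mul_neg_one, neg_neg]
  abel

theorem Phi_apply {k : ℕ} (θ : (Fin k → V) → g) (u : Fin (k + 1) → V) :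
    Phi K ρ θ u = -ρ (θ (init u)) (u (last k)) := rfl

theorem Phi_apply_castSucc_succAbove {k : ℕ} (θ : (Fin k → V) → g) (w : Fin (k + 2) → V)
    (i : Fin (k + 1)) :
    Phi K ρ θ (fun l => w (i.castSucc.succAbove l)) =
      -ρ (θ (fun l => init w (i.succAbove l))) (w (last (k + 1))) := by
  simp only [Phi, init, castSucc_succAbove_castSucc, succAbove_castSucc_of_le _ _ (le_last i),
    succ_last]

end EmbeddingTensorCohomology

open EmbeddingTensorCohomology in
theorem Phi_cochain_map_general
    (K : Type*) [Field K] (g V : Type*) [LieRing g] [LieAlgebra K g]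
    [AddCommGroup V] [Module K V]
    (ρ : g →ₗ⁅K⁆ Module.End K V) (T : V →ₗ[K] g)
    (k : ℕ) (θ : MultilinearMap K (fun _ : Fin k => V) g) :
    Phi K ρ (dT K ρ T ⇑θ) = lp K ρ T (Phi K ρ ⇑θ) := by
  funext u
  rw [Phi_apply, dT_apply, lp_apply_succ]
  simp only [Phi_apply_castSucc_succAbove, Fin.init_update_castSucc, Fin.init_update_last,
    Function.update_self, Function.update_of_ne (Fin.castSucc_lt_last _).ne']
  simp only [Phi_apply, map_add, map_sum, map_smul, map_neg, apply_ite, map_zero,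
    DFunLike.ite_apply, LinearMap.zero_apply, LinearMap.add_apply, LinearMap.sum_apply,
    LinearMap.smul_apply, LinearMap.neg_apply, map_lie_apply]
  simp only [pow_succ, mul_neg_one, neg_smul, smul_neg, smul_sub, neg_neg, neg_add,
    ← Finset.sum_filter, Finset.sum_neg_distrib, Finset.sum_sub_distrib, Fin.init]
  abel

open EmbeddingTensorCohomology in
/-- `Φ` is a cochain map from the complex of the embedding tensor `T` to the
Loday–Pirashvili complex of the induced Leibniz algebra `(V, [·,·]_T)` with regular
coefficients: `Φ(∂_T θ) = ∂(Φ(θ))` for every `k`-multilinear `θ : V^k → g`. -/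
theorem Phi_cochain_map
    (K : Type*) [Field K] (g V : Type*) [LieRing g] [LieAlgebra K g]
    [AddCommGroup V] [Module K V]
    (ρ : g →ₗ⁅K⁆ Module.End K V) (T : V →ₗ[K] g)
    (hT : ∀ u v : V, ⁅T u, T v⁆ = T (ρ (T u) v))
    (k : ℕ) (hk : 1 ≤ k) (θ : MultilinearMap K (fun _ : Fin k => V) g) :
    Phi K ρ (dT K ρ T ⇑θ) = lp K ρ T (Phi K ρ ⇑θ) :=
  Phi_cochain_map_general K g V ρ T k θ
end

section
/- Let (g,[·,·]_g) be a Lie algebra over a field K, ρ: g → gl(V) a representation, T: V → g an embedding tensor, and let ω: g × g → g be an alternating bilinear map, ϱ: g × V → V a bilinear map, 𝒯: V → g a linear map. On g × g define the bracket [(x,a),(y,b)]_t = ([x,y]_g, [x,b]_g + [a,y]_g + ω(x,y)); on (g×g) × (V×V) define the action ρ_t(x,a)(u,w) = (ρ(x)u, ρ(x)w + ρ(a)u + ϱ(x,u)); define T_t: V×V → g×g by T_t(u,w) = (Tu, 𝒯u + Tw). Then ([·,·]_t is a Lie bracket on g×g, ρ_t is a representation of (g×g,[·,·]_t) on V×V,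 and T_t is an embedding tensor for it) if and only if the following three conditions hold: (i) ω is a Chevalley–Eilenberg 2-cocycle of g with adjoint coefficients, i.e. ω([x,y]_g,z) + ω([y,z]_g,x) + ω([z,x]_g,y) = [x,ω(y,z)]_g + [y,ω(z,x)]_g + [z,ω(x,y)]_g; (ii) ρ(ω(x,y))v + ϱ([x,y]_g,v) = ρ(x)ϱ(y,v) + ϱ(x,ρ(y)v) − ρ(y)ϱ(x,v) − ϱ(y,ρ(x)v) for all x,y ∈ g, v ∈ V; (iii) [𝒯u,Tv]_g + [Tu,𝒯v]_g + ω(Tu,Tv) = T(ρ(𝒯u)v + ϱ(Tu,v)) + 𝒯(ρ(Tu)v) for all u,v ∈ V. -/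
attribute [local instance 100] LieRing.ofAssociativeRing

/-! Each identity for the deformed structures splits into a `t⁰`-part, which is the same
identity for `(g, V, T)`, and a `t¹`-part. At elements with zero `t`-component the `t¹`-parts
are exactly (i)–(iii). Conversely, by bilinearity the `t¹`-part at general elements is the
one at their `t⁰`-components plus terms that cancel by the Jacobi identity of `g`, the
representation property of `ρ` and the embedding tensor identity of `T`. -/

namespace InfinitesimalDeformation

variable {K g V : Type*} [CommRing K] [LieRing g] [LieAlgebra K g] [AddCommGroup V] [Module K V]

def bracket (ω : g →ₗ[K] g →ₗ[K] g) (p q : g × g) : g × g :=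
  (⁅p.1, q.1⁆, ⁅p.1, q.2⁆ + ⁅p.2, q.1⁆ + ω p.1 q.1)

def action (ρ : g →ₗ⁅K⁆ Module.End K V) (ϱ : g →ₗ[K] V →ₗ[K] V) (p : g × g) (u : V × V) :
    V × V :=
  (ρ p.1 u.1, ρ p.1 u.2 + ρ p.2 u.1 + ϱ p.1 u.1)

def tensor (T 𝒯 : V →ₗ[K] g) (u : V × V) : g × g :=
  (T u.1, 𝒯 u.1 + T u.2)

theorem bracket_self {ω : g →ₗ[K] g →ₗ[K] g} (hω : ω.IsAlt) (p : g × g) :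
    bracket ω p p = 0 := by
  have hskew : ⁅p.1, p.2⁆ + ⁅p.2, p.1⁆ = 0 := by rw [← lie_skew p.1 p.2, neg_add_cancel]
  simp only [bracket, lie_self, hω.self_eq_zero, add_zero, hskew, Prod.mk_eq_zero, and_self]

/-- By skew-symmetry of `ω`, the cocycle condition (i) is equivalent to the `t`-part of the
Leibniz identity of `[·,·]_t` evaluated at `(x, 0), (y, 0), (z, 0)`. -/
theorem cocycle_iff_leibniz {ω : g →ₗ[K] g →ₗ[K] g} (hω : ω.IsAlt) (x y z : g) :
    ω ⁅x, y⁆ z + ω ⁅y, z⁆ x + ω ⁅z, x⁆ y = ⁅x, ω y z⁆ + ⁅y, ω z x⁆ + ⁅z, ω x y⁆ ↔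
      ⁅x, ω y z⁆ + ω x ⁅y, z⁆ = ⁅ω x y, z⁆ + ω ⁅x, y⁆ z + (⁅y, ω x z⁆ + ω y ⁅x, z⁆) := by
  have e₁ : ω x ⁅y, z⁆ = -ω ⁅y, z⁆ x := (hω.neg _ _).symm
  have e₂ : ⁅ω x y, z⁆ = -⁅z, ω x y⁆ := (lie_skew _ _).symm
  have e₃ : ⁅y, ω x z⁆ = -⁅y, ω z x⁆ := by rw [← hω.neg z x, lie_neg]
  have e₄ : ω y ⁅x, z⁆ = ω ⁅z, x⁆ y := by
    rw [← hω.neg, ← lie_skew z x, map_neg, LinearMap.neg_apply]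
  constructor <;> intro h <;> linear_combination (norm := abel) -h + e₁ - e₂ - e₃ - e₄

theorem bracket_leibniz_iff (ω : g →ₗ[K] g →ₗ[K] g) :
    (∀ p q r : g × g,
        bracket ω p (bracket ω q r) = bracket ω (bracket ω p q) r + bracket ω q (bracket ω p r)) ↔
      ∀ x y z : g,
        ⁅x, ω y z⁆ + ω x ⁅y, z⁆ = ⁅ω x y, z⁆ + ω ⁅x, y⁆ z + (⁅y, ω x z⁆ + ω y ⁅x, z⁆) := by
  constructor
  · intro h x y z
    have h₁ := congrArg Prod.snd (h (x, 0) (y, 0) (z, 0))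
    simpa only [bracket, lie_zero, zero_lie, add_zero, zero_add, Prod.snd_add] using h₁
  · intro h p q r
    refine Prod.ext (leibniz_lie _ _ _) ?_
    simp only [bracket, Prod.snd_add, lie_add, add_lie, lie_lie]
    linear_combination (norm := abel) h p.1 q.1 r.1

theorem _root_.LieHom.map_lie_apply_s14 (ρ : g →ₗ⁅K⁆ Module.End K V) (x y : g) (v : V) :
    ρ ⁅x, y⁆ v = ρ x (ρ y v) - ρ y (ρ x v) := by
  rw [LieHom.map_lie, Ring.lie_def, LinearMap.sub_apply, Module.End.mul_apply,
    Module.End.mul_apply]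

theorem action_bracket_iff (ω : g →ₗ[K] g →ₗ[K] g) (ρ : g →ₗ⁅K⁆ Module.End K V)
    (ϱ : g →ₗ[K] V →ₗ[K] V) :
    (∀ (p q : g × g) (u : V × V), action ρ ϱ (bracket ω p q) u =
        action ρ ϱ p (action ρ ϱ q u) - action ρ ϱ q (action ρ ϱ p u)) ↔
      ∀ (x y : g) (v : V), ρ (ω x y) v + ϱ ⁅x, y⁆ v =
        ρ x (ϱ y v) + ϱ x (ρ y v) - ρ y (ϱ x v) - ϱ y (ρ x v) := by
  constructor
  · intro h x y v
    have h₁ := congrArg Prod.snd (h (x, 0) (y, 0) (v, 0))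
    simp only [action, bracket, lie_zero, zero_lie, add_zero, zero_add, map_zero,
      LinearMap.zero_apply, Prod.snd_sub] at h₁
    linear_combination (norm := abel) h₁
  · intro h p q u
    refine Prod.ext (ρ.map_lie_apply_s14 _ _ _) ?_
    simp only [action, bracket, Prod.snd_sub, map_add, LinearMap.add_apply, ρ.map_lie_apply_s14]
    linear_combination (norm := abel) h p.1 q.1 u.1

theorem tensor_isEmbeddingTensor_iff (ω : g →ₗ[K] g →ₗ[K] g) (ρ : g →ₗ⁅K⁆ Module.End K V)
    (ϱ : g →ₗ[K] V →ₗ[K] V) {T : V →ₗ[K] g} (hT : ∀ u v : V, ⁅T u, T v⁆ = T (ρ (T u) v))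
    (𝒯 : V →ₗ[K] g) :
    (∀ u v : V × V, bracket ω (tensor T 𝒯 u) (tensor T 𝒯 v) =
        tensor T 𝒯 (action ρ ϱ (tensor T 𝒯 u) v)) ↔
      ∀ u v : V, ⁅𝒯 u, T v⁆ + ⁅T u, 𝒯 v⁆ + ω (T u) (T v) =
        T (ρ (𝒯 u) v + ϱ (T u) v) + 𝒯 (ρ (T u) v) := by
  constructor
  · intro h u v
    have h₁ := congrArg Prod.snd (h (u, 0) (v, 0))
    simp only [tensor, action, bracket, map_zero, add_zero, zero_add] at h₁
    linear_combination (norm := abel) h₁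
  · intro h u v
    refine Prod.ext (hT u.1 v.1) ?_
    simp only [map_add] at h
    simp only [tensor, action, bracket, lie_add, add_lie, map_add, LinearMap.add_apply]
    linear_combination (norm := abel) h u.1 v.1 + hT u.1 v.2 + hT u.2 v.1

end InfinitesimalDeformation

open InfinitesimalDeformation

/-- `(ω, ϱ, 𝒯)` generates an infinitesimal deformation of the Lie-Leibniz triple
`(g, V, T)` (encoded over `K[t]/(t²)` via pairs, `(x, a)` standing for `x + ta`) if
and only if `(ω, ϱ, 𝒯)` is a 2-cocycle, i.e. the three conditions (i)–(iii) hold. -/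
theorem infinitesimal_deformation_iff_two_cocycle
    (K g V : Type*) [Field K] [LieRing g] [LieAlgebra K g]
    [AddCommGroup V] [Module K V]
    (ρ : g →ₗ⁅K⁆ Module.End K V) (T : V →ₗ[K] g)
    (hT : ∀ u v : V, ⁅T u, T v⁆ = T (ρ (T u) v))
    (ω : g →ₗ[K] g →ₗ[K] g) (hω : ∀ x : g, ω x x = 0)
    (ϱ : g →ₗ[K] V →ₗ[K] V) (𝒯 : V →ₗ[K] g) :
    let brt : g × g → g × g → g × g :=
      fun p q => (⁅p.1, q.1⁆, ⁅p.1, q.2⁆ + ⁅p.2, q.1⁆ + ω p.1 q.1)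
    let ρt : g × g → V × V → V × V :=
      fun p u => (ρ p.1 u.1, ρ p.1 u.2 + ρ p.2 u.1 + ϱ p.1 u.1)
    let Tt : V × V → g × g := fun u => (T u.1, 𝒯 u.1 + T u.2)
    -- `[·,·]_t` is a Lie bracket, `ρ_t` is a representation, `T_t` is an embedding tensor
    ((∀ p : g × g, brt p p = 0) ∧
     (∀ p q r : g × g, brt p (brt q r) = brt (brt p q) r + brt q (brt p r)) ∧
     (∀ (p q : g × g) (u : V × V), ρt (brt p q) u = ρt p (ρt q u) - ρt q (ρt p u)) ∧
     (∀ u v : V × V, brt (Tt u) (Tt v) = Tt (ρt (Tt u) v)))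
    ↔
    -- (i) ω is a Chevalley–Eilenberg 2-cocycle of g with adjoint coefficients
    ((∀ x y z : g, ω ⁅x, y⁆ z + ω ⁅y, z⁆ x + ω ⁅z, x⁆ y =
        ⁅x, ω y z⁆ + ⁅y, ω z x⁆ + ⁅z, ω x y⁆) ∧
     -- (ii)
     (∀ (x y : g) (v : V), ρ (ω x y) v + ϱ ⁅x, y⁆ v =
        ρ x (ϱ y v) + ϱ x (ρ y v) - ρ y (ϱ x v) - ϱ y (ρ x v)) ∧
     -- (iii)
     (∀ u v : V, ⁅𝒯 u, T v⁆ + ⁅T u, 𝒯 v⁆ + ω (T u) (T v) =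
        T (ρ (𝒯 u) v + ϱ (T u) v) + 𝒯 (ρ (T u) v))) := by
  intro brt ρt Tt
  have hω : ω.IsAlt := hω
  have hcocycle := (bracket_leibniz_iff ω).trans
    (forall₃_congr fun x y z => (cocycle_iff_leibniz hω x y z).symm)
  exact (and_iff_right (bracket_self hω)).trans <| and_congr hcocycle <|
    and_congr (action_bracket_iff ω ρ ϱ) (tensor_isEmbeddingTensor_iff ω ρ ϱ hT 𝒯)
end

section
/- Let (g,[·,·]_g) be a Lie algebra over a field K, ρ: g → gl(V) a representation, T: V → g an embedding tensor, and let (ω,ϱ,𝒯) and (ω',ϱ',𝒯') both generate infinitesimal deformations of (g,V,T) (i.e. both satisfy the three 2-cocycle equations (i)–(iii) below). Suppose they are equivalent via N ∈ gl(g), S ∈ gl(V), x₀ ∈ g, meaning: in the pair-encoding over K[t]/(t²), φ(y,b) = (y, b + Ny + [x₀,y]_g) is a Lie algebra homomorphism from (g×g, [·,·]_{t,ω'}) to (g×g, [·,·]_{t,ω}), ψ(u,w) = (u, w + Su + ρ(x₀)u) intertwines the corresponding deformed representations, and T_t∘ψ = φ∘T'_t where T_t(u,w) = (Tu, 𝒯u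 + Tw) and T'_t(u,w) = (Tu, 𝒯'u + Tw). Then for all x,y ∈ g, u,v ∈ V: ω'(x,y) − ω(x,y) = [x,Ny]_g − [y,Nx]_g − N[x,y]_g; ϱ'(y,u) − ϱ(y,u) = ρ(Ny)u + ρ(y)Su − S(ρ(y)u); and 𝒯'u − 𝒯u = T(ρ(x₀)u) − [x₀,Tu]_g − N(Tu) + T(Su). -/
attribute [local instance] LieRing.ofAssociativeRing

/-!
A pair `(a, b) : g × g` stands for `a + t b` in `g ⊗ K[t]/(t²)`, and likewise for `V`; so the
three equivalence conditions are pairs of identities, whose first components are trivial.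
Evaluating them at `(x, 0), (y, 0)`, at `(y, 0), (u, 0)` and at `(u, 0)` respectively, the
second components are the three formulas, once the Jacobi identity (resp.
`ρ ⁅x₀, y⁆ = ⁅ρ x₀, ρ y⁆`) cancels the terms contributed by the inner derivation `ad x₀`.
-/

section DeformationEquivalence

variable {R g V : Type*} [CommRing R] [LieRing g] [LieAlgebra R g] [AddCommGroup V] [Module R V]

def deformedBracket (ω : g → g → g) (p q : g × g) : g × g :=
  (⁅p.1, q.1⁆, ⁅p.1, q.2⁆ + ⁅p.2, q.1⁆ + ω p.1 q.1)

def deformedAction (ρ : g →ₗ⁅R⁆ Module.End R V) (ϱ : g → V → V) (p : g × g) (m : V × V) :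
    V × V :=
  (ρ p.1 m.1, ρ p.1 m.2 + ρ p.2 m.1 + ϱ p.1 m.1)

def deformedTensor (T : V →ₗ[R] g) (𝒯 : V → g) (m : V × V) : g × g :=
  (T m.1, 𝒯 m.1 + T m.2)

def equivalenceLie (N : g → g) (x₀ : g) (r : g × g) : g × g :=
  (r.1, r.2 + N r.1 + ⁅x₀, r.1⁆)

def equivalenceRep (ρ : g →ₗ⁅R⁆ Module.End R V) (S : V → V) (x₀ : g) (m : V × V) : V × V :=
  (m.1, m.2 + S m.1 + ρ x₀ m.1)

theorem sub_eq_of_map_deformedBracket {ω ω' : g → g → g} {N : g → g} {x₀ : g}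
    (h : ∀ p q, equivalenceLie N x₀ (deformedBracket ω' p q) =
      deformedBracket ω (equivalenceLie N x₀ p) (equivalenceLie N x₀ q))
    (x y : g) :
    ω' x y - ω x y = ⁅x, N y⁆ - ⁅y, N x⁆ - N ⁅x, y⁆ := by
  have h := congrArg Prod.snd (h (x, 0) (y, 0))
  simp only [equivalenceLie, deformedBracket, lie_zero, zero_lie, zero_add, add_zero, lie_add,
    add_lie] at h
  rw [lie_lie, ← lie_skew (N x) y] at h
  linear_combination (norm := abel) h

theorem sub_eq_of_map_deformedAction {ρ : g →ₗ⁅R⁆ Module.End R V} {ϱ ϱ' : g → V → V}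
    {N : g → g} {S : V → V} {x₀ : g}
    (h : ∀ p m, equivalenceRep ρ S x₀ (deformedAction ρ ϱ' p m) =
      deformedAction ρ ϱ (equivalenceLie N x₀ p) (equivalenceRep ρ S x₀ m))
    (y : g) (u : V) :
    ϱ' y u - ϱ y u = ρ (N y) u + ρ y (S u) - S (ρ y u) := by
  have h := congrArg Prod.snd (h (y, 0) (u, 0))
  simp only [equivalenceRep, equivalenceLie, deformedAction, map_zero, map_add,
    LinearMap.zero_apply, LinearMap.add_apply, zero_add, add_zero, LieHom.map_lie,
    Ring.lie_def, LinearMap.sub_apply, Module.End.mul_apply] at h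
  linear_combination (norm := abel) h

theorem sub_eq_of_deformedTensor_comp_eq {ρ : g →ₗ⁅R⁆ Module.End R V} {T : V →ₗ[R] g}
    {𝒯 𝒯' : V → g} {N : g → g} {S : V → V} {x₀ : g}
    (h : ∀ m, deformedTensor T 𝒯 (equivalenceRep ρ S x₀ m) =
      equivalenceLie N x₀ (deformedTensor T 𝒯' m))
    (u : V) :
    𝒯' u - 𝒯 u = T (ρ x₀ u) - ⁅x₀, T u⁆ - N (T u) + T (S u) := by
  have h := congrArg Prod.snd (h (u, 0))
  simp only [deformedTensor, equivalenceRep, equivalenceLie, map_zero, map_add, zero_add,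
    add_zero] at h
  linear_combination (norm := abel) -h

end DeformationEquivalence

theorem equivalent_deformations_differ_by_coboundary_general
    (K g V : Type*) [Field K] [LieRing g] [LieAlgebra K g]
    [AddCommGroup V] [Module K V]
    (ρ : g →ₗ⁅K⁆ Module.End K V) (T : V →ₗ[K] g)
    (ω ω' : g →ₗ[K] g →ₗ[K] g)
    (ϱ ϱ' : g →ₗ[K] V →ₗ[K] V) (𝒯 𝒯' : V →ₗ[K] g)
    (N : g →ₗ[K] g) (S : V →ₗ[K] V) (x₀ : g) :
    let brt : g × g → g × g → g × g :=
      fun p q => (⁅p.1, q.1⁆, ⁅p.1, q.2⁆ + ⁅p.2, q.1⁆ + ω p.1 q.1)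
    let brt' : g × g → g × g → g × g :=
      fun p q => (⁅p.1, q.1⁆, ⁅p.1, q.2⁆ + ⁅p.2, q.1⁆ + ω' p.1 q.1)
    let ρt : g × g → V × V → V × V :=
      fun p u => (ρ p.1 u.1, ρ p.1 u.2 + ρ p.2 u.1 + ϱ p.1 u.1)
    let ρt' : g × g → V × V → V × V :=
      fun p u => (ρ p.1 u.1, ρ p.1 u.2 + ρ p.2 u.1 + ϱ' p.1 u.1)
    let Tt : V × V → g × g := fun u => (T u.1, 𝒯 u.1 + T u.2)
    let Tt' : V × V → g × g := fun u => (T u.1, 𝒯' u.1 + T u.2)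
    let φ : g × g → g × g := fun r => (r.1, r.2 + N r.1 + ⁅x₀, r.1⁆)
    let ψ : V × V → V × V := fun m => (m.1, m.2 + S m.1 + ρ x₀ m.1)
    -- `φ` is a Lie algebra homomorphism from the primed deformation to the unprimed one
    (∀ p q : g × g, φ (brt' p q) = brt (φ p) (φ q)) →
    -- `ψ` intertwines the deformed representations
    (∀ (p : g × g) (m : V × V), ψ (ρt' p m) = ρt (φ p) (ψ m)) →
    -- `(φ, ψ)` intertwines the deformed embedding tensors
    (∀ m : V × V, Tt (ψ m) = φ (Tt' m)) →
    ((∀ x y : g, ω' x y - ω x y = ⁅x, N y⁆ - ⁅y, N x⁆ - N ⁅x, y⁆) ∧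
     (∀ (y : g) (u : V), ϱ' y u - ϱ y u = ρ (N y) u + ρ y (S u) - S (ρ y u)) ∧
     (∀ u : V, 𝒯' u - 𝒯 u = T (ρ x₀ u) - ⁅x₀, T u⁆ - N (T u) + T (S u))) := by
  intro _ _ _ _ _ _ _ _ hφ hψ hTt
  exact ⟨sub_eq_of_map_deformedBracket hφ, sub_eq_of_map_deformedAction hψ,
    sub_eq_of_deformedTensor_comp_eq hTt⟩

/-- If two infinitesimal deformations `(ω, ϱ, 𝒯)` and `(ω', ϱ', 𝒯')` of a
Lie-Leibniz triple `(g, V, T)` are equivalent via `(N, S, x₀)` (in the pair encoding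
over `K[t]/(t²)`), then they differ by the coboundary of `(N, S, x₀)`. -/
theorem equivalent_deformations_differ_by_coboundary
    (K g V : Type*) [Field K] [LieRing g] [LieAlgebra K g]
    [AddCommGroup V] [Module K V]
    (ρ : g →ₗ⁅K⁆ Module.End K V) (T : V →ₗ[K] g)
    (hT : ∀ u v : V, ⁅T u, T v⁆ = T (ρ (T u) v))
    (ω ω' : g →ₗ[K] g →ₗ[K] g) (hω : ∀ x : g, ω x x = 0) (hω' : ∀ x : g, ω' x x = 0)
    (ϱ ϱ' : g →ₗ[K] V →ₗ[K] V) (𝒯 𝒯' : V →ₗ[K] g)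
    -- `(ω, ϱ, 𝒯)` is a 2-cocycle
    (hco1 : ∀ x y z : g, ω ⁅x, y⁆ z + ω ⁅y, z⁆ x + ω ⁅z, x⁆ y =
      ⁅x, ω y z⁆ + ⁅y, ω z x⁆ + ⁅z, ω x y⁆)
    (hco2 : ∀ (x y : g) (v : V), ρ (ω x y) v + ϱ ⁅x, y⁆ v =
      ρ x (ϱ y v) + ϱ x (ρ y v) - ρ y (ϱ x v) - ϱ y (ρ x v))
    (hco3 : ∀ u v : V, ⁅𝒯 u, T v⁆ + ⁅T u, 𝒯 v⁆ + ω (T u) (T v) =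
      T (ρ (𝒯 u) v + ϱ (T u) v) + 𝒯 (ρ (T u) v))
    -- `(ω', ϱ', 𝒯')` is a 2-cocycle
    (hco1' : ∀ x y z : g, ω' ⁅x, y⁆ z + ω' ⁅y, z⁆ x + ω' ⁅z, x⁆ y =
      ⁅x, ω' y z⁆ + ⁅y, ω' z x⁆ + ⁅z, ω' x y⁆)
    (hco2' : ∀ (x y : g) (v : V), ρ (ω' x y) v + ϱ' ⁅x, y⁆ v =
      ρ x (ϱ' y v) + ϱ' x (ρ y v) - ρ y (ϱ' x v) - ϱ' y (ρ x v))
    (hco3' : ∀ u v : V, ⁅𝒯' u, T v⁆ + ⁅T u, 𝒯' v⁆ + ω' (T u) (T v) =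
      T (ρ (𝒯' u) v + ϱ' (T u) v) + 𝒯' (ρ (T u) v))
    (N : g →ₗ[K] g) (S : V →ₗ[K] V) (x₀ : g) :
    let brt : g × g → g × g → g × g :=
      fun p q => (⁅p.1, q.1⁆, ⁅p.1, q.2⁆ + ⁅p.2, q.1⁆ + ω p.1 q.1)
    let brt' : g × g → g × g → g × g :=
      fun p q => (⁅p.1, q.1⁆, ⁅p.1, q.2⁆ + ⁅p.2, q.1⁆ + ω' p.1 q.1)
    let ρt : g × g → V × V → V × V :=
      fun p u => (ρ p.1 u.1, ρ p.1 u.2 + ρ p.2 u.1 + ϱ p.1 u.1)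
    let ρt' : g × g → V × V → V × V :=
      fun p u => (ρ p.1 u.1, ρ p.1 u.2 + ρ p.2 u.1 + ϱ' p.1 u.1)
    let Tt : V × V → g × g := fun u => (T u.1, 𝒯 u.1 + T u.2)
    let Tt' : V × V → g × g := fun u => (T u.1, 𝒯' u.1 + T u.2)
    let φ : g × g → g × g := fun r => (r.1, r.2 + N r.1 + ⁅x₀, r.1⁆)
    let ψ : V × V → V × V := fun m => (m.1, m.2 + S m.1 + ρ x₀ m.1)
    -- `φ` is a Lie algebra homomorphism from the primed deformation to the unprimed one
    (∀ p q : g × g, φ (brt' p q) = brt (φ p) (φ q)) →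
    -- `ψ` intertwines the deformed representations
    (∀ (p : g × g) (m : V × V), ψ (ρt' p m) = ρt (φ p) (ψ m)) →
    -- `(φ, ψ)` intertwines the deformed embedding tensors
    (∀ m : V × V, Tt (ψ m) = φ (Tt' m)) →
    ((∀ x y : g, ω' x y - ω x y = ⁅x, N y⁆ - ⁅y, N x⁆ - N ⁅x, y⁆) ∧
     (∀ (y : g) (u : V), ϱ' y u - ϱ y u = ρ (N y) u + ρ y (S u) - S (ρ y u)) ∧
     (∀ u : V, 𝒯' u - 𝒯 u = T (ρ x₀ u) - ⁅x₀, T u⁆ - N (T u) + T (S u))) :=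
  equivalent_deformations_differ_by_coboundary_general K g V ρ T ω ω' ϱ ϱ' 𝒯 𝒯' N S x₀
end

section
/- Let (g,[·,·]_g) be a Lie algebra over a field K, ρ: g → gl(V) a representation, T: V → g an embedding tensor, 𝔗: W → 𝔥 a linear map between vector spaces, φ = (φ_𝔥, φ_W): g → gl(𝔥) × gl(W) a Lie algebra homomorphism with φ_𝔥(x)∘𝔗 = 𝔗∘φ_W(x) for all x ∈ g, and φ: V → Hom(𝔥,W) a linear map such that for all x ∈ g, u ∈ V: φ_𝔥(Tu) = 𝔗∘φ(u), φ_W(Tu) = φ(u)∘𝔗, and φ(ρ(x)u) = φ_W(x)∘φ(u) − φ(u)∘φ_𝔥(x) (i.e. (W→𝔥, φ, φ) is a representation of the Lie-Leibniz triple). Then: (1) [x+α, y+β] := [x,y]_g + φ_𝔥(x)β − φ_𝔥(y)α is a Lie bracket on g ⊕ 𝔥; (2) (ρ+φ_W+φ)(x+α)(u+ξ) := ρ(x)u + φ_W(x)ξ − φ(u)α is a representation of (g ⊕ 𝔥, [·,·]) on V ⊕ W; (3) (T+𝔗)(u+ξ) := Tu + 𝔗ξ is an embedding tensor on this LieRep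 pair. -/
attribute [local instance 100] LieRing.ofAssociativeRing

/-!
Everything is checked componentwise. The `g`- and `V`-components are the axioms of `(g, V, T)`.
In the `H`- and `W`-components, expanding `φ ⁅x, y⁆ = φ x ∘ φ y - φ y ∘ φ x` turns the Jacobi
identity into an abelian-group identity and the representation property into `hrep3`; for the
embedding tensor at `(u, ξ)`, `(v, η)`, `hrep1` and `hrep2` rewrite both sides as
`𝔗 (φv u (𝔗 η)) - 𝔗 (φv v (𝔗 ξ))`.
-/

section Semidirect

variable {R g V H W : Type*} [CommRing R] [LieRing g] [LieAlgebra R g]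
  [AddCommGroup V] [Module R V] [AddCommGroup H] [Module R H] [AddCommGroup W] [Module R W]

theorem LieHom.map_lie_apply_s16 (φ : g →ₗ⁅R⁆ Module.End R H) (x y : g) (h : H) :
    φ ⁅x, y⁆ h = φ x (φ y h) - φ y (φ x h) := by
  rw [φ.map_lie, Ring.lie_def]
  rfl

def semidirectBracket (φ : g →ₗ⁅R⁆ Module.End R H) (p q : g × H) : g × H :=
  (⁅p.1, q.1⁆, φ p.1 q.2 - φ q.1 p.2)

theorem semidirectBracket_swap (φ : g →ₗ⁅R⁆ Module.End R H) (p q : g × H) :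
    semidirectBracket φ p q = -semidirectBracket φ q p := by
  ext
  · exact (lie_skew p.1 q.1).symm
  · exact (neg_sub _ _).symm

theorem semidirectBracket_jacobi (φ : g →ₗ⁅R⁆ Module.End R H) (p q r : g × H) :
    semidirectBracket φ (semidirectBracket φ p q) r + semidirectBracket φ (semidirectBracket φ q r) p
      + semidirectBracket φ (semidirectBracket φ r p) q = 0 := by
  ext
  · simp only [semidirectBracket, Prod.fst_add, Prod.fst_zero]
    rw [← lie_skew ⁅p.1, q.1⁆, ← lie_skew ⁅q.1, r.1⁆, ← lie_skew ⁅r.1, p.1⁆]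
    linear_combination (norm := abel) -lie_jacobi p.1 q.1 r.1
  · simp only [semidirectBracket, Prod.snd_add, Prod.snd_zero, φ.map_lie_apply_s16, map_sub]
    abel

def semidirectAction (ρ : g →ₗ⁅R⁆ Module.End R V) (φW : g →ₗ⁅R⁆ Module.End R W)
    (φv : V →ₗ[R] H →ₗ[R] W) (p : g × H) (m : V × W) : V × W :=
  (ρ p.1 m.1, φW p.1 m.2 - φv m.1 p.2)

theorem semidirectAction_semidirectBracket (ρ : g →ₗ⁅R⁆ Module.End R V)
    (φH : g →ₗ⁅R⁆ Module.End R H) (φW : g →ₗ⁅R⁆ Module.End R W) (φv : V →ₗ[R] H →ₗ[R] W)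
    (hφv : ∀ (x : g) (u : V), φv (ρ x u) = φW x ∘ₗ φv u - φv u ∘ₗ φH x)
    (p q : g × H) (m : V × W) :
    semidirectAction ρ φW φv (semidirectBracket φH p q) m
      = semidirectAction ρ φW φv p (semidirectAction ρ φW φv q m)
        - semidirectAction ρ φW φv q (semidirectAction ρ φW φv p m) := by
  ext
  · exact ρ.map_lie_apply_s16 p.1 q.1 m.1
  · simp only [semidirectAction, semidirectBracket, Prod.snd_sub, φW.map_lie_apply_s16, map_sub,
      hφv, LinearMap.sub_apply, LinearMap.comp_apply]
    abel

theorem semidirectBracket_prodMap (ρ : g →ₗ⁅R⁆ Module.End R V) (T : V →ₗ[R] g)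
    (hT : ∀ u v : V, ⁅T u, T v⁆ = T (ρ (T u) v)) (𝔗 : W →ₗ[R] H)
    (φH : g →ₗ⁅R⁆ Module.End R H) (φW : g →ₗ⁅R⁆ Module.End R W) (φv : V →ₗ[R] H →ₗ[R] W)
    (hφH : ∀ u : V, φH (T u) = 𝔗 ∘ₗ φv u) (hφW : ∀ u : V, φW (T u) = φv u ∘ₗ 𝔗)
    (m n : V × W) :
    semidirectBracket φH (Prod.map T 𝔗 m) (Prod.map T 𝔗 n)
      = Prod.map T 𝔗 (semidirectAction ρ φW φv (Prod.map T 𝔗 m) n) := by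
  ext
  · exact hT m.1 n.1
  · simp only [semidirectBracket, semidirectAction, Prod.map_fst, Prod.map_snd, hφH, hφW, map_sub,
      LinearMap.comp_apply]

end Semidirect

theorem semidirect_product_lieLeibniz_triple_general
    (K g V H W : Type*) [Field K] [LieRing g] [LieAlgebra K g]
    [AddCommGroup V] [Module K V] [AddCommGroup H] [Module K H]
    [AddCommGroup W] [Module K W]
    (ρ : g →ₗ⁅K⁆ Module.End K V) (T : V →ₗ[K] g)
    (hT : ∀ u v : V, ⁅T u, T v⁆ = T (ρ (T u) v))
    (𝔗 : W →ₗ[K] H)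
    (φH : g →ₗ⁅K⁆ Module.End K H) (φW : g →ₗ⁅K⁆ Module.End K W)
    (φv : V →ₗ[K] H →ₗ[K] W)
    (hrep1 : ∀ u : V, φH (T u) = 𝔗 ∘ₗ (φv u))
    (hrep2 : ∀ u : V, φW (T u) = (φv u) ∘ₗ 𝔗)
    (hrep3 : ∀ (x : g) (u : V), φv (ρ x u) = (φW x) ∘ₗ (φv u) - (φv u) ∘ₗ (φH x)) :
    let br : g × H → g × H → g × H :=
      fun p q => (⁅p.1, q.1⁆, φH p.1 q.2 - φH q.1 p.2)
    let rep : g × H → V × W → V × W :=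
      fun p m => (ρ p.1 m.1, φW p.1 m.2 - φv m.1 p.2)
    let Tsd : V × W → g × H := fun m => (T m.1, 𝔗 m.2)
    -- (1) `br` is a Lie bracket on `g ⊕ H`
    ((∀ p q : g × H, br p q = -br q p) ∧
     (∀ p q r : g × H, br (br p q) r + br (br q r) p + br (br r p) q = 0) ∧
     -- (2) `rep` is a representation of `(g ⊕ H, br)` on `V ⊕ W`
     (∀ (p q : g × H) (m : V × W), rep (br p q) m = rep p (rep q m) - rep q (rep p m)) ∧
     -- (3) `T + 𝔗` is an embedding tensor on this LieRep pair
     (∀ m n : V × W, br (Tsd m) (Tsd n) = Tsd (rep (Tsd m) n))) := by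
  intro br rep Tsd
  exact ⟨semidirectBracket_swap φH, semidirectBracket_jacobi φH,
    semidirectAction_semidirectBracket ρ φH φW φv hrep3,
    semidirectBracket_prodMap ρ T hT 𝔗 φH φW φv hrep1 hrep2⟩

/-- The semidirect product of a Lie-Leibniz triple `(g, V, T)` with a representation
`(W → H, φ, φv)` is again a Lie-Leibniz triple. -/
theorem semidirect_product_lieLeibniz_triple
    (K g V H W : Type*) [Field K] [LieRing g] [LieAlgebra K g]
    [AddCommGroup V] [Module K V] [AddCommGroup H] [Module K H]
    [AddCommGroup W] [Module K W]
    (ρ : g →ₗ⁅K⁆ Module.End K V) (T : V →ₗ[K] g)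
    (hT : ∀ u v : V, ⁅T u, T v⁆ = T (ρ (T u) v))
    (𝔗 : W →ₗ[K] H)
    (φH : g →ₗ⁅K⁆ Module.End K H) (φW : g →ₗ⁅K⁆ Module.End K W)
    (hcompat : ∀ x : g, (φH x) ∘ₗ 𝔗 = 𝔗 ∘ₗ (φW x))
    (φv : V →ₗ[K] H →ₗ[K] W)
    (hrep1 : ∀ u : V, φH (T u) = 𝔗 ∘ₗ (φv u))
    (hrep2 : ∀ u : V, φW (T u) = (φv u) ∘ₗ 𝔗)
    (hrep3 : ∀ (x : g) (u : V), φv (ρ x u) = (φW x) ∘ₗ (φv u) - (φv u) ∘ₗ (φH x)) :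
    let br : g × H → g × H → g × H :=
      fun p q => (⁅p.1, q.1⁆, φH p.1 q.2 - φH q.1 p.2)
    let rep : g × H → V × W → V × W :=
      fun p m => (ρ p.1 m.1, φW p.1 m.2 - φv m.1 p.2)
    let Tsd : V × W → g × H := fun m => (T m.1, 𝔗 m.2)
    -- (1) `br` is a Lie bracket on `g ⊕ H`
    ((∀ p q : g × H, br p q = -br q p) ∧
     (∀ p q r : g × H, br (br p q) r + br (br q r) p + br (br r p) q = 0) ∧
     -- (2) `rep` is a representation of `(g ⊕ H, br)` on `V ⊕ W`
     (∀ (p q : g × H) (m : V × W), rep (br p q) m = rep p (rep q m) - rep q (rep p m)) ∧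
     -- (3) `T + 𝔗` is an embedding tensor on this LieRep pair
     (∀ m n : V × W, br (Tsd m) (Tsd n) = Tsd (rep (Tsd m) n))) :=
  semidirect_product_lieLeibniz_triple_general K g V H W ρ T hT 𝔗 φH φW φv hrep1 hrep2 hrep3
end

section
/- Let (g,[·,·]_g, ρ, T) and (ĝ,[·,·]_ĝ, ρ̂, T̂) be Lie-Leibniz triples over a field K, 𝔭: ĝ → g a surjective Lie algebra homomorphism with kernel 𝔥, p: V̂ → V a surjective linear map with kernel W, satisfying T∘p = 𝔭∘T̂ and p(ρ̂(x̂)û) = ρ(𝔭(x̂))(p(û)) for all x̂ ∈ ĝ, û ∈ V̂, and suppose the extension is central: [α, x̂]_ĝ = 0 for all α ∈ 𝔥, x̂ ∈ ĝ; ρ̂(x̂)ξ = 0 for all x̂ ∈ ĝ, ξ ∈ W; ρ̂(α)û = 0 for all α ∈ 𝔥, û ∈ V̂. Let 𝔰: g → ĝ and s: V → V̂ be linear sections (𝔭∘𝔰 = id, p∘s = id), and define ω(x,y) = [𝔰x,𝔰y]_ĝ − 𝔰[x,y]_g, ϖ(x,u) = ρ̂(𝔰x)(su) − s(ρ(x)u),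 𝒯(u) = T̂(su) − 𝔰(Tu). Then: (1) ω takes values in 𝔥, ϖ takes values in W, 𝒯 takes values in 𝔥, and T̂(W) ⊆ 𝔥; (2) ω([x,y]_g,z) + ω([y,z]_g,x) + ω([z,x]_g,y) = 0 for all x,y,z ∈ g; (3) ϖ([x,y]_g,u) + ϖ(y,ρ(x)u) − ϖ(x,ρ(y)u) = 0 for all x,y ∈ g, u ∈ V; (4) ω(Tu,Tv) − T̂(ϖ(Tu,v)) − 𝒯(ρ(Tu)v) = 0 for all u,v ∈ V. -/
attribute [local instance 100] LieRing.ofAssociativeRing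

/-!
Centrality says precisely that the bracket of `ĝ` and the actions `ρ̂` factor through `𝔭` and
`p`. So inside brackets and actions one may replace `𝔰 ⁅x, y⁆` by `⁅𝔰 x, 𝔰 y⁆`, `s (ρ x u)` by
`ρ̂ (𝔰 x) (s u)` and `𝔰 (T u)` by `T̂ (s u)`. After these substitutions the three cocycle
identities become the Jacobi identity of `ĝ` minus `𝔰` of that of `g`, the representation
property of `ρ̂` minus `s` of that of `ρ`, and the embedding-tensor identity of `T̂` minus `𝔰` of
that of `T`.
-/

theorem map_eq_map_of_vanishes_on_ker {A B C F G : Type*} [AddGroup A] [AddGroup B] [AddGroup C]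
    [FunLike F A B] [AddMonoidHomClass F A B] [FunLike G A C] [AddMonoidHomClass G A C]
    {f : F} {φ : G} (hker : ∀ a, f a = 0 → φ a = 0) {a b : A} (h : f a = f b) : φ a = φ b := by
  rw [← sub_eq_zero, ← map_sub]
  exact hker _ (by rw [map_sub, h, sub_self])

theorem lie_lie_add_lie_lie_add_lie_lie {L : Type*} [LieRing L] (x y z : L) :
    ⁅⁅x, y⁆, z⁆ + ⁅⁅y, z⁆, x⁆ + ⁅⁅z, x⁆, y⁆ = 0 := by
  rw [← lie_skew ⁅x, y⁆ z, ← lie_skew ⁅y, z⁆ x, ← lie_skew ⁅z, x⁆ y]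
  linear_combination (norm := abel) -lie_jacobi x y z

section CentralExtension

variable {K g ghat V Vhat : Type*} [CommRing K]
  [LieRing g] [LieAlgebra K g] [LieRing ghat] [LieAlgebra K ghat]
  [AddCommGroup V] [Module K V] [AddCommGroup Vhat] [Module K Vhat]

def sectionLieDefect (𝔰 : g →ₗ[K] ghat) (x y : g) : ghat := ⁅𝔰 x, 𝔰 y⁆ - 𝔰 ⁅x, y⁆

def sectionActionDefect (ρ : g →ₗ⁅K⁆ Module.End K V) (ρh : ghat →ₗ⁅K⁆ Module.End K Vhat)
    (𝔰 : g →ₗ[K] ghat) (s : V →ₗ[K] Vhat) (x : g) (u : V) : Vhat :=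
  ρh (𝔰 x) (s u) - s (ρ x u)

def sectionTensorDefect (T : V →ₗ[K] g) (Th : Vhat →ₗ[K] ghat) (𝔰 : g →ₗ[K] ghat)
    (s : V →ₗ[K] Vhat) (u : V) : ghat :=
  Th (s u) - 𝔰 (T u)

variable {ρ : g →ₗ⁅K⁆ Module.End K V} {T : V →ₗ[K] g}
  {ρh : ghat →ₗ⁅K⁆ Module.End K Vhat} {Th : Vhat →ₗ[K] ghat}
  {𝔭 : ghat →ₗ⁅K⁆ g} {p : Vhat →ₗ[K] V} {𝔰 : g →ₗ[K] ghat} {s : V →ₗ[K] Vhat}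

theorem lie_congr_of_map_eq (hcen : ∀ α xh : ghat, 𝔭 α = 0 → ⁅α, xh⁆ = 0) {a b c d : ghat}
    (hab : 𝔭 a = 𝔭 b) (hcd : 𝔭 c = 𝔭 d) : ⁅a, c⁆ = ⁅b, d⁆ := by
  have hker : ∀ α, 𝔭 α = 0 → LieAlgebra.ad K ghat α = 0 := fun α hα =>
    LinearMap.ext fun xh => hcen α xh hα
  have lie_left {x y : ghat} (h : 𝔭 x = 𝔭 y) (z : ghat) : ⁅x, z⁆ = ⁅y, z⁆ :=
    LinearMap.congr_fun (map_eq_map_of_vanishes_on_ker (φ := LieAlgebra.ad K ghat) hker h) z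
  calc ⁅a, c⁆ = ⁅b, c⁆ := lie_left hab c
    _ = -⁅c, b⁆ := (lie_skew b c).symm
    _ = -⁅d, b⁆ := by rw [lie_left hcd b]
    _ = ⁅b, d⁆ := lie_skew b d

theorem action_congr_of_map_eq (hact : ∀ (α : ghat) (uh : Vhat), 𝔭 α = 0 → ρh α uh = 0)
    {a b : ghat} (hab : 𝔭 a = 𝔭 b) : ρh a = ρh b :=
  map_eq_map_of_vanishes_on_ker (fun α hα => LinearMap.ext fun uh => hact α uh hα) hab

theorem map_section_lie (h𝔰 : ∀ x, 𝔭 (𝔰 x) = x) (x y : g) :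
    𝔭 (𝔰 ⁅x, y⁆) = 𝔭 ⁅𝔰 x, 𝔰 y⁆ := by
  rw [LieHom.map_lie, h𝔰, h𝔰, h𝔰]

theorem map_section_action (hcom : ∀ (xh : ghat) (uh : Vhat), p (ρh xh uh) = ρ (𝔭 xh) (p uh))
    (h𝔰 : ∀ x, 𝔭 (𝔰 x) = x) (hs : ∀ u, p (s u) = u) (x : g) (u : V) :
    p (s (ρ x u)) = p (ρh (𝔰 x) (s u)) := by
  rw [hcom, h𝔰, hs, hs]

theorem map_section_tensor (hcom : ∀ uh : Vhat, T (p uh) = 𝔭 (Th uh))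
    (h𝔰 : ∀ x, 𝔭 (𝔰 x) = x) (hs : ∀ u, p (s u) = u) (u : V) :
    𝔭 (𝔰 (T u)) = 𝔭 (Th (s u)) := by
  rw [← hcom, h𝔰, hs]

theorem map_sectionLieDefect (h𝔰 : ∀ x, 𝔭 (𝔰 x) = x) (x y : g) :
    𝔭 (sectionLieDefect 𝔰 x y) = 0 := by
  rw [sectionLieDefect, map_sub, map_section_lie h𝔰, sub_self]

theorem map_sectionActionDefect
    (hcom : ∀ (xh : ghat) (uh : Vhat), p (ρh xh uh) = ρ (𝔭 xh) (p uh))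
    (h𝔰 : ∀ x, 𝔭 (𝔰 x) = x) (hs : ∀ u, p (s u) = u) (x : g) (u : V) :
    p (sectionActionDefect ρ ρh 𝔰 s x u) = 0 := by
  rw [sectionActionDefect, map_sub, map_section_action hcom h𝔰 hs, sub_self]

theorem map_sectionTensorDefect (hcom : ∀ uh : Vhat, T (p uh) = 𝔭 (Th uh))
    (h𝔰 : ∀ x, 𝔭 (𝔰 x) = x) (hs : ∀ u, p (s u) = u) (u : V) :
    𝔭 (sectionTensorDefect T Th 𝔰 s u) = 0 := by
  rw [sectionTensorDefect, map_sub, map_section_tensor hcom h𝔰 hs, sub_self]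

theorem sectionLieDefect_cyclic (hcen : ∀ α xh : ghat, 𝔭 α = 0 → ⁅α, xh⁆ = 0)
    (h𝔰 : ∀ x, 𝔭 (𝔰 x) = x) (x y z : g) :
    sectionLieDefect 𝔰 ⁅x, y⁆ z + sectionLieDefect 𝔰 ⁅y, z⁆ x + sectionLieDefect 𝔰 ⁅z, x⁆ y
      = 0 := by
  have lift (a b c : g) : ⁅𝔰 ⁅a, b⁆, 𝔰 c⁆ = ⁅⁅𝔰 a, 𝔰 b⁆, 𝔰 c⁆ :=
    lie_congr_of_map_eq hcen (map_section_lie h𝔰 a b) rfl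
  simp only [sectionLieDefect, lift]
  calc _ = (⁅⁅𝔰 x, 𝔰 y⁆, 𝔰 z⁆ + ⁅⁅𝔰 y, 𝔰 z⁆, 𝔰 x⁆ + ⁅⁅𝔰 z, 𝔰 x⁆, 𝔰 y⁆)
        - 𝔰 (⁅⁅x, y⁆, z⁆ + ⁅⁅y, z⁆, x⁆ + ⁅⁅z, x⁆, y⁆) := by
          simp only [map_add]; abel
    _ = 0 := by
      rw [lie_lie_add_lie_lie_add_lie_lie, lie_lie_add_lie_lie_add_lie_lie, map_zero, sub_zero]

theorem sectionActionDefect_cocycle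
    (hcom : ∀ (xh : ghat) (uh : Vhat), p (ρh xh uh) = ρ (𝔭 xh) (p uh))
    (hactV : ∀ (xh : ghat) (ξ : Vhat), p ξ = 0 → ρh xh ξ = 0)
    (hact : ∀ (α : ghat) (uh : Vhat), 𝔭 α = 0 → ρh α uh = 0)
    (h𝔰 : ∀ x, 𝔭 (𝔰 x) = x) (hs : ∀ u, p (s u) = u) (x y : g) (u : V) :
    sectionActionDefect ρ ρh 𝔰 s ⁅x, y⁆ u + sectionActionDefect ρ ρh 𝔰 s y (ρ x u)
      - sectionActionDefect ρ ρh 𝔰 s x (ρ y u) = 0 := by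
  have bracket : ρh (𝔰 ⁅x, y⁆) (s u) = ρh (𝔰 x) (ρh (𝔰 y) (s u)) - ρh (𝔰 y) (ρh (𝔰 x) (s u)) := by
    rw [action_congr_of_map_eq hact (map_section_lie h𝔰 x y), LieHom.map_lie, Ring.lie_def]
    rfl
  have lift (a b : g) : ρh (𝔰 a) (s (ρ b u)) = ρh (𝔰 a) (ρh (𝔰 b) (s u)) :=
    map_eq_map_of_vanishes_on_ker (hactV _) (map_section_action hcom h𝔰 hs b u)
  have rep : ρ ⁅x, y⁆ u = ρ x (ρ y u) - ρ y (ρ x u) := by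
    rw [LieHom.map_lie, Ring.lie_def]
    rfl
  simp only [sectionActionDefect, bracket, lift, rep, map_sub]
  abel

theorem sectionLieDefect_sub_sub_sectionTensorDefect
    (hT : ∀ u v : V, ⁅T u, T v⁆ = T (ρ (T u) v))
    (hTh : ∀ u v : Vhat, ⁅Th u, Th v⁆ = Th (ρh (Th u) v))
    (hcom : ∀ uh : Vhat, T (p uh) = 𝔭 (Th uh))
    (hcen : ∀ α xh : ghat, 𝔭 α = 0 → ⁅α, xh⁆ = 0)
    (hact : ∀ (α : ghat) (uh : Vhat), 𝔭 α = 0 → ρh α uh = 0)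
    (h𝔰 : ∀ x, 𝔭 (𝔰 x) = x) (hs : ∀ u, p (s u) = u) (u v : V) :
    sectionLieDefect 𝔰 (T u) (T v) - Th (sectionActionDefect ρ ρh 𝔰 s (T u) v)
      - sectionTensorDefect T Th 𝔰 s (ρ (T u) v) = 0 := by
  have lift := map_section_tensor hcom h𝔰 hs
  have bracket : ⁅𝔰 (T u), 𝔰 (T v)⁆ = ⁅Th (s u), Th (s v)⁆ :=
    lie_congr_of_map_eq hcen (lift u) (lift v)
  have action : ρh (𝔰 (T u)) (s v) = ρh (Th (s u)) (s v) :=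
    LinearMap.congr_fun (action_congr_of_map_eq hact (lift u)) (s v)
  simp only [sectionLieDefect, sectionActionDefect, sectionTensorDefect, bracket, action, hTh, hT,
    map_sub]
  abel

end CentralExtension

theorem central_extension_section_two_cocycle_general
    (K g ghat V Vhat : Type*) [Field K]
    [LieRing g] [LieAlgebra K g] [LieRing ghat] [LieAlgebra K ghat]
    [AddCommGroup V] [Module K V] [AddCommGroup Vhat] [Module K Vhat]
    (ρ : g →ₗ⁅K⁆ Module.End K V) (T : V →ₗ[K] g)
    (hT : ∀ u v : V, ⁅T u, T v⁆ = T (ρ (T u) v))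
    (ρh : ghat →ₗ⁅K⁆ Module.End K Vhat) (Th : Vhat →ₗ[K] ghat)
    (hTh : ∀ u v : Vhat, ⁅Th u, Th v⁆ = Th (ρh (Th u) v))
    (𝔭 : ghat →ₗ⁅K⁆ g)
    (p : Vhat →ₗ[K] V)
    (hcom1 : ∀ uh : Vhat, T (p uh) = 𝔭 (Th uh))
    (hcom2 : ∀ (xh : ghat) (uh : Vhat), p (ρh xh uh) = ρ (𝔭 xh) (p uh))
    -- centrality
    (hcen1 : ∀ α xh : ghat, 𝔭 α = 0 → ⁅α, xh⁆ = 0)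
    (hcen2 : ∀ (xh : ghat) (ξ : Vhat), p ξ = 0 → ρh xh ξ = 0)
    (hcen3 : ∀ (α : ghat) (uh : Vhat), 𝔭 α = 0 → ρh α uh = 0)
    -- sections
    (𝔰 : g →ₗ[K] ghat) (h𝔰 : ∀ x : g, 𝔭 (𝔰 x) = x)
    (s : V →ₗ[K] Vhat) (hs : ∀ u : V, p (s u) = u) :
    let ω : g → g → ghat := fun x y => ⁅𝔰 x, 𝔰 y⁆ - 𝔰 ⁅x, y⁆
    let ϖ : g → V → Vhat := fun x u => ρh (𝔰 x) (s u) - s (ρ x u)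
    let 𝒯 : V → ghat := fun u => Th (s u) - 𝔰 (T u)
    -- (1) values in the kernels
    ((∀ x y : g, 𝔭 (ω x y) = 0) ∧ (∀ (x : g) (u : V), p (ϖ x u) = 0) ∧
     (∀ u : V, 𝔭 (𝒯 u) = 0) ∧ (∀ ξ : Vhat, p ξ = 0 → 𝔭 (Th ξ) = 0)) ∧
    -- (2)
    (∀ x y z : g, ω ⁅x, y⁆ z + ω ⁅y, z⁆ x + ω ⁅z, x⁆ y = 0) ∧
    -- (3)
    (∀ (x y : g) (u : V), ϖ ⁅x, y⁆ u + ϖ y (ρ x u) - ϖ x (ρ y u) = 0) ∧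
    -- (4)
    (∀ u v : V, ω (T u) (T v) - Th (ϖ (T u) v) - 𝒯 (ρ (T u) v) = 0) :=
  ⟨⟨map_sectionLieDefect h𝔰, map_sectionActionDefect hcom2 h𝔰 hs,
      map_sectionTensorDefect hcom1 h𝔰 hs, fun ξ hξ => by rw [← hcom1, hξ, map_zero]⟩,
    sectionLieDefect_cyclic hcen1 h𝔰,
    sectionActionDefect_cocycle hcom2 hcen2 hcen3 h𝔰 hs,
    sectionLieDefect_sub_sub_sectionTensorDefect hT hTh hcom1 hcen1 hcen3 h𝔰 hs⟩

/-- For a central extension of a Lie-Leibniz triple `(g, V, T)` and linear sections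
`(𝔰, s)`, the data `ω(x,y) = [𝔰x, 𝔰y] − 𝔰[x,y]`, `ϖ(x,u) = ρ̂(𝔰x)(su) − s(ρ(x)u)`,
`𝒯(u) = T̂(su) − 𝔰(Tu)` take values in the kernels and form a 2-cocycle with trivial
coefficients. -/
theorem central_extension_section_two_cocycle
    (K g ghat V Vhat : Type*) [Field K]
    [LieRing g] [LieAlgebra K g] [LieRing ghat] [LieAlgebra K ghat]
    [AddCommGroup V] [Module K V] [AddCommGroup Vhat] [Module K Vhat]
    (ρ : g →ₗ⁅K⁆ Module.End K V) (T : V →ₗ[K] g)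
    (hT : ∀ u v : V, ⁅T u, T v⁆ = T (ρ (T u) v))
    (ρh : ghat →ₗ⁅K⁆ Module.End K Vhat) (Th : Vhat →ₗ[K] ghat)
    (hTh : ∀ u v : Vhat, ⁅Th u, Th v⁆ = Th (ρh (Th u) v))
    (𝔭 : ghat →ₗ⁅K⁆ g) (hpsurj : Function.Surjective 𝔭)
    (p : Vhat →ₗ[K] V) (hpVsurj : Function.Surjective p)
    (hcom1 : ∀ uh : Vhat, T (p uh) = 𝔭 (Th uh))
    (hcom2 : ∀ (xh : ghat) (uh : Vhat), p (ρh xh uh) = ρ (𝔭 xh) (p uh))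
    -- centrality
    (hcen1 : ∀ α xh : ghat, 𝔭 α = 0 → ⁅α, xh⁆ = 0)
    (hcen2 : ∀ (xh : ghat) (ξ : Vhat), p ξ = 0 → ρh xh ξ = 0)
    (hcen3 : ∀ (α : ghat) (uh : Vhat), 𝔭 α = 0 → ρh α uh = 0)
    -- sections
    (𝔰 : g →ₗ[K] ghat) (h𝔰 : ∀ x : g, 𝔭 (𝔰 x) = x)
    (s : V →ₗ[K] Vhat) (hs : ∀ u : V, p (s u) = u) :
    let ω : g → g → ghat := fun x y => ⁅𝔰 x, 𝔰 y⁆ - 𝔰 ⁅x, y⁆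
    let ϖ : g → V → Vhat := fun x u => ρh (𝔰 x) (s u) - s (ρ x u)
    let 𝒯 : V → ghat := fun u => Th (s u) - 𝔰 (T u)
    -- (1) values in the kernels
    ((∀ x y : g, 𝔭 (ω x y) = 0) ∧ (∀ (x : g) (u : V), p (ϖ x u) = 0) ∧
     (∀ u : V, 𝔭 (𝒯 u) = 0) ∧ (∀ ξ : Vhat, p ξ = 0 → 𝔭 (Th ξ) = 0)) ∧
    -- (2)
    (∀ x y z : g, ω ⁅x, y⁆ z + ω ⁅y, z⁆ x + ω ⁅z, x⁆ y = 0) ∧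
    -- (3)
    (∀ (x y : g) (u : V), ϖ ⁅x, y⁆ u + ϖ y (ρ x u) - ϖ x (ρ y u) = 0) ∧
    -- (4)
    (∀ u v : V, ω (T u) (T v) - Th (ϖ (T u) v) - 𝒯 (ρ (T u) v) = 0) :=
  central_extension_section_two_cocycle_general K g ghat V Vhat ρ T hT ρh Th hTh 𝔭 p hcom1 hcom2
    hcen1 hcen2 hcen3 𝔰 h𝔰 s hs
end

section
/- In the setting of a central extension of a Lie-Leibniz triple (g,V,T) by (𝔥,W) with two pairs of linear sections (𝔰,s) and (𝔰',s') of (𝔭,p), set N = 𝔰' − 𝔰 (which takes values in 𝔥) and S = s' − s (which takes values in W), and let (ω,ϖ,𝒯) and (ω',ϖ',𝒯') be the associated 2-cocycles (ω(x,y) = [𝔰x,𝔰y]_ĝ − 𝔰[x,y]_g, ϖ(x,u) = ρ̂(𝔰x)(su) − s(ρ(x)u), 𝒯(u) = T̂(su) − 𝔰(Tu), and similarly with primes). Then for all x,y ∈ g, u ∈ V: ω'(x,y) − ω(x,y) = −N([x,y]_g); ϖ'(x,u) − ϖ(x,u) = −S(ρ(x)u); and 𝒯'(u) − 𝒯(u)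 = T̂(Su) − N(Tu). Hence the two cocycles differ by a coboundary and define the same cohomology class. -/
attribute [local instance 100] LieRing.ofAssociativeRing

/-! Changing the sections moves them by `N` and `S`, which land in the kernels. By centrality
these perturbations are invisible to the brackets `⁅𝔰 x, 𝔰 y⁆` and to the actions `ρ̂ (𝔰 x) (s u)`,
so only the terms that are linear in the sections change. -/

theorem map_sub_eq_zero_of_sections {M N F : Type*} [AddGroup M] [AddGroup N]
    [FunLike F M N] [AddMonoidHomClass F M N] (f : F) {σ σ' : N → M}
    (hσ : ∀ x, f (σ x) = x) (hσ' : ∀ x, f (σ' x) = x) (x : N) :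
    f (σ' x - σ x) = 0 := by
  rw [map_sub, hσ, hσ', sub_self]

theorem lie_add_add_of_central {L : Type*} [LieRing L] {α β : L}
    (hα : ∀ z : L, ⁅α, z⁆ = 0) (hβ : ∀ z : L, ⁅β, z⁆ = 0) (a b : L) :
    ⁅a + α, b + β⁆ = ⁅a, b⁆ := by
  rw [add_lie, lie_add, lie_add, hα, hα, ← lie_skew a β, hβ, neg_zero, add_zero, add_zero,
    add_zero]

theorem LieHom.apply_add_apply_add_of_annihilates {R L M : Type*} [CommRing R] [LieRing L]
    [LieAlgebra R L] [AddCommGroup M] [Module R M] (ρ : L →ₗ⁅R⁆ Module.End R M)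
    {a α : L} {ξ : M} (hα : ∀ v, ρ α v = 0) (hξ : ρ a ξ = 0) (v : M) :
    ρ (a + α) (v + ξ) = ρ a v := by
  rw [map_add ρ, LinearMap.add_apply, hα, add_zero, map_add, hξ, add_zero]

theorem central_extension_cocycles_differ_by_coboundary_general
    (K g ghat V Vhat : Type*) [Field K]
    [LieRing g] [LieAlgebra K g] [LieRing ghat] [LieAlgebra K ghat]
    [AddCommGroup V] [Module K V] [AddCommGroup Vhat] [Module K Vhat]
    (ρ : g →ₗ⁅K⁆ Module.End K V) (T : V →ₗ[K] g)
    (ρh : ghat →ₗ⁅K⁆ Module.End K Vhat) (Th : Vhat →ₗ[K] ghat)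
    (𝔭 : ghat →ₗ⁅K⁆ g)
    (p : Vhat →ₗ[K] V)
    -- centrality
    (hcen1 : ∀ α xh : ghat, 𝔭 α = 0 → ⁅α, xh⁆ = 0)
    (hcen2 : ∀ (xh : ghat) (ξ : Vhat), p ξ = 0 → ρh xh ξ = 0)
    (hcen3 : ∀ (α : ghat) (uh : Vhat), 𝔭 α = 0 → ρh α uh = 0)
    -- two pairs of sections
    (𝔰 𝔰' : g →ₗ[K] ghat) (h𝔰 : ∀ x : g, 𝔭 (𝔰 x) = x) (h𝔰' : ∀ x : g, 𝔭 (𝔰' x) = x)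
    (s s' : V →ₗ[K] Vhat) (hs : ∀ u : V, p (s u) = u) (hs' : ∀ u : V, p (s' u) = u) :
    let N : g →ₗ[K] ghat := 𝔰' - 𝔰
    let S : V →ₗ[K] Vhat := s' - s
    let ω : g → g → ghat := fun x y => ⁅𝔰 x, 𝔰 y⁆ - 𝔰 ⁅x, y⁆
    let ω' : g → g → ghat := fun x y => ⁅𝔰' x, 𝔰' y⁆ - 𝔰' ⁅x, y⁆
    let ϖ : g → V → Vhat := fun x u => ρh (𝔰 x) (s u) - s (ρ x u)
    let ϖ' : g → V → Vhat := fun x u => ρh (𝔰' x) (s' u) - s' (ρ x u)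
    let 𝒯 : V → ghat := fun u => Th (s u) - 𝔰 (T u)
    let 𝒯' : V → ghat := fun u => Th (s' u) - 𝔰' (T u)
    -- `N` and `S` take values in `𝔥 = ker 𝔭` and `W = ker p`
    ((∀ x : g, 𝔭 (N x) = 0) ∧ (∀ u : V, p (S u) = 0)) ∧
    -- the two cocycles differ by the coboundary of `(N, S)`
    ((∀ x y : g, ω' x y - ω x y = -N ⁅x, y⁆) ∧
     (∀ (x : g) (u : V), ϖ' x u - ϖ x u = -S (ρ x u)) ∧
     (∀ u : V, 𝒯' u - 𝒯 u = Th (S u) - N (T u))) := by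
  intro N S ω ω' ϖ ϖ' 𝒯 𝒯'
  have hN (x : g) : 𝔭 (N x) = 0 := map_sub_eq_zero_of_sections 𝔭 h𝔰 h𝔰' x
  have hS (u : V) : p (S u) = 0 := map_sub_eq_zero_of_sections p hs hs' u
  have h𝔰'_eq (x : g) : 𝔰' x = 𝔰 x + N x := (add_sub_cancel _ _).symm
  have hs'_eq (u : V) : s' u = s u + S u := (add_sub_cancel _ _).symm
  refine ⟨⟨hN, hS⟩, fun x y => ?_, fun x u => ?_, fun u => ?_⟩
  · change ⁅𝔰' x, 𝔰' y⁆ - 𝔰' ⁅x, y⁆ - (⁅𝔰 x, 𝔰 y⁆ - 𝔰 ⁅x, y⁆) = -N ⁅x, y⁆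
    rw [h𝔰'_eq x, h𝔰'_eq y, h𝔰'_eq ⁅x, y⁆,
      lie_add_add_of_central (hcen1 _ · (hN x)) (hcen1 _ · (hN y))]
    abel
  · change ρh (𝔰' x) (s' u) - s' (ρ x u) - (ρh (𝔰 x) (s u) - s (ρ x u)) = -S (ρ x u)
    rw [h𝔰'_eq x, hs'_eq u, hs'_eq (ρ x u),
      ρh.apply_add_apply_add_of_annihilates (hcen3 _ · (hN x)) (hcen2 _ _ (hS u))]
    abel
  · change Th (s' u) - 𝔰' (T u) - (Th (s u) - 𝔰 (T u)) =
      Th (s' u - s u) - (𝔰' (T u) - 𝔰 (T u))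
    rw [map_sub]
    abel

/-- For a central extension of a Lie-Leibniz triple `(g, V, T)` by `(𝔥, W)` with two
pairs of sections `(𝔰, s)` and `(𝔰', s')`, the difference of the associated
2-cocycles is the coboundary of `(N, S) = (𝔰' − 𝔰, s' − s)`, which takes values in
the kernels. -/
theorem central_extension_cocycles_differ_by_coboundary
    (K g ghat V Vhat : Type*) [Field K]
    [LieRing g] [LieAlgebra K g] [LieRing ghat] [LieAlgebra K ghat]
    [AddCommGroup V] [Module K V] [AddCommGroup Vhat] [Module K Vhat]
    (ρ : g →ₗ⁅K⁆ Module.End K V) (T : V →ₗ[K] g)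
    (hT : ∀ u v : V, ⁅T u, T v⁆ = T (ρ (T u) v))
    (ρh : ghat →ₗ⁅K⁆ Module.End K Vhat) (Th : Vhat →ₗ[K] ghat)
    (hTh : ∀ u v : Vhat, ⁅Th u, Th v⁆ = Th (ρh (Th u) v))
    (𝔭 : ghat →ₗ⁅K⁆ g) (hpsurj : Function.Surjective 𝔭)
    (p : Vhat →ₗ[K] V) (hpVsurj : Function.Surjective p)
    (hcom1 : ∀ uh : Vhat, T (p uh) = 𝔭 (Th uh))
    (hcom2 : ∀ (xh : ghat) (uh : Vhat), p (ρh xh uh) = ρ (𝔭 xh) (p uh))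
    -- centrality
    (hcen1 : ∀ α xh : ghat, 𝔭 α = 0 → ⁅α, xh⁆ = 0)
    (hcen2 : ∀ (xh : ghat) (ξ : Vhat), p ξ = 0 → ρh xh ξ = 0)
    (hcen3 : ∀ (α : ghat) (uh : Vhat), 𝔭 α = 0 → ρh α uh = 0)
    -- two pairs of sections
    (𝔰 𝔰' : g →ₗ[K] ghat) (h𝔰 : ∀ x : g, 𝔭 (𝔰 x) = x) (h𝔰' : ∀ x : g, 𝔭 (𝔰' x) = x)
    (s s' : V →ₗ[K] Vhat) (hs : ∀ u : V, p (s u) = u) (hs' : ∀ u : V, p (s' u) = u) :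
    let N : g →ₗ[K] ghat := 𝔰' - 𝔰
    let S : V →ₗ[K] Vhat := s' - s
    let ω : g → g → ghat := fun x y => ⁅𝔰 x, 𝔰 y⁆ - 𝔰 ⁅x, y⁆
    let ω' : g → g → ghat := fun x y => ⁅𝔰' x, 𝔰' y⁆ - 𝔰' ⁅x, y⁆
    let ϖ : g → V → Vhat := fun x u => ρh (𝔰 x) (s u) - s (ρ x u)
    let ϖ' : g → V → Vhat := fun x u => ρh (𝔰' x) (s' u) - s' (ρ x u)
    let 𝒯 : V → ghat := fun u => Th (s u) - 𝔰 (T u)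
    let 𝒯' : V → ghat := fun u => Th (s' u) - 𝔰' (T u)
    -- `N` and `S` take values in `𝔥 = ker 𝔭` and `W = ker p`
    ((∀ x : g, 𝔭 (N x) = 0) ∧ (∀ u : V, p (S u) = 0)) ∧
    -- the two cocycles differ by the coboundary of `(N, S)`
    ((∀ x y : g, ω' x y - ω x y = -N ⁅x, y⁆) ∧
     (∀ (x : g) (u : V), ϖ' x u - ϖ x u = -S (ρ x u)) ∧
     (∀ u : V, 𝒯' u - 𝒯 u = Th (S u) - N (T u))) :=
  central_extension_cocycles_differ_by_coboundary_general K g ghat V Vhat ρ T ρh Th 𝔭 p hcen1 hcen2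
    hcen3 𝔰 𝔰' h𝔰 h𝔰' s s' hs hs'
end
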